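/- arXiv:2410.12981 — 6 statements merged into one kernel-verified Lean document; each statement's English description precedes it below -/
import Mathlib

section
/- Let H be a nonempty finite simple graph and let m ≤ e(H) be a positive integer. Then there exists a spanning subgraph H' of H with exactly m edges such that the maximum degree of the complement graph H \ H' (the graph on V(H) with edge set E(H) \ E(H')) satisfies Δ(H \ H') ≤ (Δ(H) + 1) · (e(H) - m)/e(H) + 1. -/
/-!
By Vizing's theorem the edges of `H` split into `Δ(H) + 1` matchings (colour classes). The `t`
largest classes together hold at least `t · e(H) / (Δ(H) + 1)` edges, so for
`t = ⌊(e(H) - m)(Δ(H) + 1) / e(H)⌋ + 1` they contain `e(H) - m` edges; deleting those leaves `m`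
edges, and the deleted edges form a graph of maximum degree at most `t`, one edge per class at
each vertex.

Vizing's theorem is proved one edge at a time. To colour `uv`, follow the fan at `u` in which
each edge `u z (i+1)` has the colour chosen as missing at `z i`. If the fan reaches a colour missing
at `u`, shift each colour one step down the fan. Otherwise the fan reaches two vertices missing the
same colour `β`; the `(α, β)`-Kempe component of `u`, where `α` is missing at `u`, is a path and
contains at most one of them. After swapping `α` and `β` on the component of the other one, the
fan cut at that vertex can be shifted.
-/

open scoped Classical

open Finset

namespace SimpleGraph

variable {V : Type*} [Fintype V] {G : SimpleGraph V} [DecidableRel G.Adj]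

/-- By the handshake lemma the component `C` of `u` would have fewer than `|C| - 1` edges. -/
theorem Reachable.not_reachable_of_degree_le_one (hG : ∀ x, G.degree x ≤ 2) {u a b : V}
    (hua : u ≠ a) (hub : u ≠ b) (hab : a ≠ b)
    (hu : G.degree u ≤ 1) (ha : G.degree a ≤ 1) (hb : G.degree b ≤ 1)
    (hra : G.Reachable u a) : ¬ G.Reachable u b := by
  intro hrb
  obtain ⟨C, hC⟩ : ∃ C, G.connectedComponentMk u = C := ⟨_, rfl⟩
  have mem {x : V} (hx : G.Reachable u x) : x ∈ C :=
    (ConnectedComponent.mem_supp_iff _ _).2 (hC ▸ ConnectedComponent.eq.2 hx.symm)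
  have hdeg (x : C) : C.toSimpleGraph.degree x = G.degree x := by
    convert degree_induce_of_neighborSet_subset fun _ hy => C.mem_supp_of_adj_mem_supp x.2 hy
      <;> rfl
  let L : Finset C := {⟨u, mem .rfl⟩, ⟨a, mem hra⟩, ⟨b, mem hrb⟩}
  have hL : #L = 3 := by simp [L, card_insert_of_notMem, hua, hub, hab]
  have hsum : ∑ x, (C.toSimpleGraph.degree x + if x ∈ L then 1 else 0) ≤ ∑ _x : C, 2 := by
    refine sum_le_sum fun x _ => ?_
    rw [hdeg]
    split_ifs with hx
    · simp only [L, mem_insert, mem_singleton] at hx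
      rcases hx with rfl | rfl | rfl <;> simpa
    · linarith [hG x]
  rw [sum_add_distrib, sum_degrees_eq_twice_card_edges, sum_boole, sum_const, card_univ,
    filter_mem_eq_inter, univ_inter, hL, smul_eq_mul] at hsum
  have hconn := C.connected_toSimpleGraph.card_vert_le_card_edgeSet_add_one
  rw [Nat.card_eq_fintype_card, Nat.card_eq_fintype_card, ← edgeFinset_card] at hconn
  omega

end SimpleGraph

namespace Function

variable {α : Type*} {f : α → α} {x : α}

lemma injOn_iterate_of_first_mem {S : Set α} {P : ℕ} (hP : f^[P] x ∈ S)
    (hmin : ∀ i < P, f^[i] x ∉ S) : Set.InjOn (f^[·] x) (Set.Iic P) := by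
  have key {i j : ℕ} (hij : i < j) (hj : j ≤ P) : f^[i] x ≠ f^[j] x := fun h => by
    apply hmin (P - j + i) (by omega)
    rwa [iterate_add_apply, h, ← iterate_add_apply, Nat.sub_add_cancel hj]
  intro i hi j hj h
  obtain hij | rfl | hji := lt_trichotomy i j
  · exact absurd h (key hij hj)
  · rfl
  · exact absurd h.symm (key hji hi)

lemma exists_iterate_eq_iterate_succ_injOn [Finite α] (f : α → α) (x : α) :
    ∃ q n, q ≤ n ∧ f^[q] x = f^[n + 1] x ∧ Set.InjOn (f^[·] x) (Set.Iic n) := by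
  have h : ∃ J, ∃ q < J, f^[q] x = f^[J] x := by
    obtain ⟨i, j, hij, h⟩ := Finite.exists_ne_map_eq_of_infinite (f^[·] x)
    obtain hij | hji := hij.lt_or_gt
    · exact ⟨j, i, hij, h⟩
    · exact ⟨i, j, hji, h.symm⟩
  obtain ⟨q, hqJ, hq⟩ := Nat.find_spec h
  obtain ⟨n, hn⟩ := Nat.exists_eq_succ_of_ne_zero (by omega : Nat.find h ≠ 0)
  refine ⟨q, n, by omega, by rwa [hn] at hq, fun i hi j hj hij => ?_⟩
  by_contra hne
  simp only [Set.mem_Iic] at hi hj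
  obtain hlt | hlt := Ne.lt_or_gt hne
  · exact Nat.find_min h (by omega : j < Nat.find h) ⟨i, hlt, hij⟩
  · exact Nat.find_min h (by omega : i < Nat.find h) ⟨j, hlt, hij.symm⟩

end Function

theorem Finset.exists_subset_card_eq_sum_mul_le {ι : Type*} (g : ι → ℕ) (s : Finset ι) {t : ℕ}
    (ht : t ≤ #s) : ∃ T ⊆ s, #T = t ∧ (∑ i ∈ s, g i) * t ≤ (∑ i ∈ T, g i) * #s := by
  obtain ⟨T, hT, hmax⟩ :=
    exists_max_image (s.powersetCard t) (∑ i ∈ ·, g i) (powersetCard_nonempty.2 ht)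
  obtain ⟨hTs, rfl⟩ := mem_powersetCard.1 hT
  refine ⟨T, hTs, rfl, ?_⟩
  have hout {i j : ι} (hi : i ∈ T) (hj : j ∈ s \ T) : g j ≤ g i := by
    have hjT : j ∉ T.erase i := fun h => (mem_sdiff.1 hj).2 (mem_of_mem_erase h)
    have := hmax (insert j (T.erase i)) <| mem_powersetCard.2
      ⟨insert_subset (mem_sdiff.1 hj).1 ((erase_subset _ _).trans hTs),
        by rw [card_insert_of_notMem hjT, card_erase_add_one hi]⟩
    rw [sum_insert hjT, ← add_sum_erase T g hi] at this
    omega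
  have key : (∑ j ∈ s \ T, g j) * #T ≤ #(s \ T) * ∑ i ∈ T, g i := calc
    (∑ j ∈ s \ T, g j) * #T = ∑ j ∈ s \ T, ∑ _i ∈ T, g j := by rw [sum_mul]; simp [mul_comm]
    _ ≤ ∑ j ∈ s \ T, ∑ i ∈ T, g i := sum_le_sum fun j hj => sum_le_sum fun i hi => hout hi hj
    _ = #(s \ T) * ∑ i ∈ T, g i := by simp
  rw [card_sdiff_of_subset hTs] at key
  calc (∑ i ∈ s, g i) * #T = (∑ j ∈ s \ T, g j) * #T + (∑ i ∈ T, g i) * #T := by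
        rw [← sum_sdiff hTs, add_mul]
    _ ≤ (#s - #T) * (∑ i ∈ T, g i) + (∑ i ∈ T, g i) * #T := by gcongr
    _ = (∑ i ∈ T, g i) * #s := by rw [mul_comm, ← mul_add, Nat.sub_add_cancel (card_le_card hTs)]

noncomputable section

/-! An edge set is a `Finset (Sym2 V)`; colourings are functions on all of `Sym2 V`, whose values
off the edge set play no role. -/

namespace EdgeColoring

variable {V κ : Type*} {E : Finset (Sym2 V)} {c : Sym2 V → κ}

def edgeDegree (E : Finset (Sym2 V)) (v : V) : ℕ := #{e ∈ E | v ∈ e}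

def IsProperOn (E : Finset (Sym2 V)) (c : Sym2 V → κ) : Prop :=
  ∀ e ∈ E, ∀ f ∈ E, ∀ x ∈ e, x ∈ f → c e = c f → e = f

def IsMissing (E : Finset (Sym2 V)) (c : Sym2 V → κ) (v : V) (γ : κ) : Prop :=
  ∀ e ∈ E, v ∈ e → c e ≠ γ

lemma edgeDegree_mono {E' : Finset (Sym2 V)} (h : E' ⊆ E) (v : V) :
    edgeDegree E' v ≤ edgeDegree E v :=
  card_le_card (filter_subset_filter _ h)

lemma exists_isMissing [Fintype κ] (c : Sym2 V → κ) {v : V}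
    (h : edgeDegree E v < Fintype.card κ) : ∃ γ, IsMissing E c v γ := by
  obtain ⟨γ, -, hγ⟩ := exists_mem_notMem_of_card_lt_card
    (card_image_le.trans_lt (h.trans_eq card_univ.symm) : #({e ∈ E | v ∈ e}.image c) < _)
  exact ⟨γ, fun e he hve hce => hγ (mem_image.2 ⟨e, mem_filter.2 ⟨he, hve⟩, hce⟩)⟩

lemma not_isMissing_iff {u : V} {γ : κ} :
    ¬ IsMissing E c u γ ↔ ∃ y, s(u, y) ∈ E ∧ c s(u, y) = γ := by
  simp only [IsMissing, not_forall, not_not, Sym2.mem_iff_exists]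
  constructor
  · rintro ⟨e, he, ⟨y, rfl⟩, hγ⟩
    exact ⟨y, he, hγ⟩
  · rintro ⟨y, he, hγ⟩
    exact ⟨_, he, ⟨y, rfl⟩, hγ⟩

lemma IsProperOn.eq_of_color_eq (hc : IsProperOn E c) {u y y' : V} (hy : s(u, y) ∈ E)
    (hy' : s(u, y') ∈ E) (h : c s(u, y) = c s(u, y')) : y = y' :=
  Sym2.congr_right.1 (hc _ hy _ hy' u (Sym2.mem_mk_left _ _) (Sym2.mem_mk_left _ _) h)

section Kempe

variable (E c) (α β : κ)

def kempeGraph : SimpleGraph V := SimpleGraph.fromEdgeSet {e | e ∈ E ∧ (c e = α ∨ c e = β)}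

def kempeSwap (w : V) (e : Sym2 V) : κ :=
  if ∃ x ∈ e, (kempeGraph E c α β).Reachable w x then Equiv.swap α β (c e) else c e

variable {E c α β}

lemma kempeGraph_adj {x y : V} : (kempeGraph E c α β).Adj x y ↔
    (s(x, y) ∈ E ∧ (c s(x, y) = α ∨ c s(x, y) = β)) ∧ x ≠ y :=
  SimpleGraph.fromEdgeSet_adj _

lemma IsProperOn.kempeGraph_degree_le [Fintype V] (hc : IsProperOn E c) (x : V) {s : Finset κ}
    (hs : ∀ y, s(x, y) ∈ E → (c s(x, y) = α ∨ c s(x, y) = β) → c s(x, y) ∈ s) :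
    (kempeGraph E c α β).degree x ≤ #s := by
  rw [← SimpleGraph.card_neighborFinset_eq_degree]
  have hadj {y : V} (hy : y ∈ (kempeGraph E c α β).neighborFinset x) :
      s(x, y) ∈ E ∧ (c s(x, y) = α ∨ c s(x, y) = β) :=
    (kempeGraph_adj.1 (((kempeGraph E c α β).mem_neighborFinset x y).1 hy)).1
  refine card_le_card_of_injOn (fun y => c s(x, y)) (fun y hy => hs y (hadj hy).1 (hadj hy).2) ?_
  exact fun y hy y' hy' h => hc.eq_of_color_eq (hadj hy).1 (hadj hy').1 h

lemma IsProperOn.kempeGraph_degree_le_two [Fintype V] (hc : IsProperOn E c) (x : V) :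
    (kempeGraph E c α β).degree x ≤ 2 :=
  (hc.kempeGraph_degree_le x fun _ _ h => by simpa using h).trans card_le_two

lemma IsProperOn.kempeGraph_degree_le_one [Fintype V] (hc : IsProperOn E c) {x : V}
    (hx : IsMissing E c x α ∨ IsMissing E c x β) : (kempeGraph E c α β).degree x ≤ 1 := by
  rcases hx with h | h
  · refine (hc.kempeGraph_degree_le x (s := {β}) fun y hy hαβ => ?_).trans (card_singleton _).le
    exact mem_singleton.2 (hαβ.resolve_left (h _ hy (Sym2.mem_mk_left _ _)))
  · refine (hc.kempeGraph_degree_le x (s := {α}) fun y hy hαβ => ?_).trans (card_singleton _).le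
    exact mem_singleton.2 (hαβ.resolve_right (h _ hy (Sym2.mem_mk_left _ _)))

lemma reachable_of_mem_of_reachable {w x y : V} {e : Sym2 V} (he : e ∈ E)
    (hce : c e = α ∨ c e = β) (hx : x ∈ e) (hy : y ∈ e)
    (hwx : (kempeGraph E c α β).Reachable w x) : (kempeGraph E c α β).Reachable w y := by
  obtain rfl | hxy := eq_or_ne x y
  · exact hwx
  obtain rfl := (Sym2.mem_and_mem_iff hxy).1 ⟨hx, hy⟩
  exact hwx.trans (kempeGraph_adj.2 ⟨⟨he, hce⟩, hxy⟩).reachable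

lemma kempeSwap_apply_of_not_reachable {w y : V} {e : Sym2 V} (he : e ∈ E) (hy : y ∈ e)
    (hwy : ¬ (kempeGraph E c α β).Reachable w y) : kempeSwap E c α β w e = c e := by
  unfold kempeSwap
  split_ifs with h
  · obtain ⟨x, hx, hwx⟩ := h
    by_cases hce : c e = α ∨ c e = β
    · exact absurd (reachable_of_mem_of_reachable he hce hx hy hwx) hwy
    · exact Equiv.swap_apply_of_ne_of_ne (not_or.1 hce).1 (not_or.1 hce).2
  · rfl

lemma kempeSwap_apply_of_reachable {w x : V} {e : Sym2 V} (hx : x ∈ e)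
    (hwx : (kempeGraph E c α β).Reachable w x) : kempeSwap E c α β w e = Equiv.swap α β (c e) :=
  if_pos ⟨x, hx, hwx⟩

lemma IsProperOn.kempeSwap (hc : IsProperOn E c) (w : V) :
    IsProperOn E (kempeSwap E c α β w) := by
  intro e he f hf x hxe hxf h
  refine hc e he f hf x hxe hxf ?_
  by_cases hwx : (kempeGraph E c α β).Reachable w x
  · rwa [kempeSwap_apply_of_reachable hxe hwx, kempeSwap_apply_of_reachable hxf hwx,
      (Equiv.swap α β).apply_eq_iff_eq] at h
  · rwa [kempeSwap_apply_of_not_reachable he hxe hwx,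
      kempeSwap_apply_of_not_reachable hf hxf hwx] at h

lemma IsMissing.kempeSwap_of_not_reachable {w y : V} {γ : κ} (h : IsMissing E c y γ)
    (hwy : ¬ (kempeGraph E c α β).Reachable w y) : IsMissing E (kempeSwap E c α β w) y γ :=
  fun e he hye => kempeSwap_apply_of_not_reachable he hye hwy ▸ h e he hye

lemma IsMissing.kempeSwap_of_ne {w y : V} {γ : κ} (h : IsMissing E c y γ) (hα : γ ≠ α)
    (hβ : γ ≠ β) : IsMissing E (kempeSwap E c α β w) y γ := by
  intro e he hye
  unfold EdgeColoring.kempeSwap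
  split_ifs
  · rw [Ne, Equiv.swap_apply_eq_iff, Equiv.swap_apply_of_ne_of_ne hα hβ]
    exact h e he hye
  · exact h e he hye

lemma IsMissing.kempeSwap_self {w : V} (h : IsMissing E c w β) :
    IsMissing E (kempeSwap E c α β w) w α := by
  intro e he hwe
  rw [kempeSwap_apply_of_reachable hwe .rfl, Ne, Equiv.swap_apply_eq_iff, Equiv.swap_apply_left]
  exact h e he hwe

end Kempe

section Fan

/-- A fan at `u` for the uncoloured edge `u z 0`. -/
structure IsFan (E : Finset (Sym2 V)) (c : Sym2 V → κ) (u : V) (z : ℕ → V) (γ : ℕ → κ)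
    (p : ℕ) : Prop where
  injOn : Set.InjOn z (Set.Iic p)
  mem : ∀ i < p, s(u, z (i + 1)) ∈ E
  color : ∀ i < p, c s(u, z (i + 1)) = γ i
  missing : ∀ i ≤ p, IsMissing E c (z i) (γ i)

variable {u : V} {z : ℕ → V} {γ : ℕ → κ} {p : ℕ}

lemma IsFan.color_ne (hF : IsFan E c u z γ p) (hc : IsProperOn E c) (hu : IsMissing E c u (γ p))
    {i j : ℕ} (hij : i < j) (hj : j ≤ p) : γ i ≠ γ j := by
  rw [← hF.color i (hij.trans_le hj)]
  obtain rfl | hjp := hj.eq_or_lt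
  · exact hu _ (hF.mem i hij) (Sym2.mem_mk_left _ _)
  rw [← hF.color j hjp]
  intro h
  have := hF.injOn (Set.mem_Iic.2 (by omega)) (Set.mem_Iic.2 (by omega))
    (hc.eq_of_color_eq (hF.mem i (hij.trans hjp)) (hF.mem j hjp) h)
  omega

lemma IsFan.color_ne_of_not_mem (hF : IsFan E c u z γ p) (hc : IsProperOn E c)
    (hu : IsMissing E c u (γ p)) {i : ℕ} (hi : i ≤ p) {f : Sym2 V} (hf : f ∈ E)
    (hfF : ¬ ∃ j ≤ p, f = s(u, z j)) {x : V} (hxi : x ∈ s(u, z i)) (hxf : x ∈ f) :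
    c f ≠ γ i := by
  obtain rfl | rfl := Sym2.mem_iff.1 hxi
  · obtain rfl | hip := hi.eq_or_lt
    · exact hu f hf hxf
    rw [← hF.color i hip]
    exact fun h => hfF ⟨i + 1, hip, hc _ hf _ (hF.mem i hip) x hxf (Sym2.mem_mk_left _ _) h⟩
  · exact hF.missing i hi f hf hxf

/-- Rotating the fan: every fan edge `u z i` takes the colour `γ i`. -/
theorem IsFan.exists_isProperOn_insert (hF : IsFan E c u z γ p) (hc : IsProperOn E c)
    (hu : IsMissing E c u (γ p)) : ∃ c' : Sym2 V → κ, IsProperOn (insert s(u, z 0) E) c' := by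
  let c' (e : Sym2 V) : κ := if h : ∃ i ≤ p, e = s(u, z i) then γ h.choose else c e
  have hfan {i : ℕ} (hi : i ≤ p) : c' s(u, z i) = γ i := by
    have h : ∃ j ≤ p, s(u, z i) = s(u, z j) := ⟨i, hi, rfl⟩
    simp only [c', dif_pos h]
    rw [hF.injOn (Set.mem_Iic.2 h.choose_spec.1) (Set.mem_Iic.2 hi)
      (Sym2.congr_right.1 h.choose_spec.2).symm]
  have hrest {f : Sym2 V} (hf : ¬ ∃ j ≤ p, f = s(u, z j)) : c' f = c f := dif_neg hf
  have hmem {f : Sym2 V} (hf : f ∈ insert s(u, z 0) E) (hfF : ¬ ∃ j ≤ p, f = s(u, z j)) :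
      f ∈ E :=
    (mem_insert.1 hf).resolve_left fun h => hfF ⟨0, Nat.zero_le _, h⟩
  refine ⟨c', fun e he f hf x hxe hxf h => ?_⟩
  by_cases heF : ∃ i ≤ p, e = s(u, z i) <;> by_cases hfF : ∃ j ≤ p, f = s(u, z j)
  · obtain ⟨i, hi, rfl⟩ := heF
    obtain ⟨j, hj, rfl⟩ := hfF
    rw [hfan hi, hfan hj] at h
    obtain hij | rfl | hji := lt_trichotomy i j
    · exact absurd h (hF.color_ne hc hu hij hj)
    · rfl
    · exact absurd h.symm (hF.color_ne hc hu hji hi)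
  · obtain ⟨i, hi, rfl⟩ := heF
    rw [hfan hi, hrest hfF] at h
    exact absurd h.symm (hF.color_ne_of_not_mem hc hu hi (hmem hf hfF) hfF hxe hxf)
  · obtain ⟨j, hj, rfl⟩ := hfF
    rw [hfan hj, hrest heF] at h
    exact absurd h (hF.color_ne_of_not_mem hc hu hj (hmem he heF) heF hxf hxe)
  · rw [hrest heF, hrest hfF] at h
    exact hc e (hmem he heF) f (hmem hf hfF) x hxe hxf h

/-- Swapping `α` and `γ p` on the Kempe component of `z p` makes `α` missing at both `u` and `z p`,
and leaves the rest of the fan intact. -/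
theorem IsFan.exists_isProperOn_insert_of_kempe (hF : IsFan E c u z γ p) (hc : IsProperOn E c)
    {α : κ} (hα : IsMissing E c u α) (hγα : ∀ i < p, γ i ≠ α)
    (hu : ¬ (kempeGraph E c α (γ p)).Reachable (z p) u)
    (hsame : ∀ i < p, γ i = γ p → ¬ (kempeGraph E c α (γ p)).Reachable (z p) (z i)) :
    ∃ c' : Sym2 V → κ, IsProperOn (insert s(u, z 0) E) c' := by
  have hF' : IsFan E (kempeSwap E c α (γ p) (z p)) u z (Function.update γ p α) p := by
    refine ⟨hF.injOn, hF.mem, fun i hi => ?_, fun i hi => ?_⟩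
    · rw [Function.update_of_ne hi.ne, kempeSwap_apply_of_not_reachable (hF.mem i hi)
        (Sym2.mem_mk_left _ _) hu, hF.color i hi]
    · obtain rfl | hip := hi.eq_or_lt
      · rw [Function.update_self]
        exact (hF.missing i hi).kempeSwap_self
      rw [Function.update_of_ne hip.ne]
      by_cases hβ : γ i = γ p
      · exact (hF.missing i hi).kempeSwap_of_not_reachable (hsame i hip hβ)
      · exact (hF.missing i hi).kempeSwap_of_ne (hγα i hip) hβ
  refine hF'.exists_isProperOn_insert (hc.kempeSwap _) ?_
  rw [Function.update_self]
  exact hα.kempeSwap_of_not_reachable hu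

end Fan

section FanSequence

variable (E c) (u : V) (free : V → κ)

/-- `free` chooses a colour missing at each vertex; the fan at `u` for `uv` is the orbit of `v`. -/
def fanNext (w : V) : V :=
  if h : ∃ y, s(u, y) ∈ E ∧ c s(u, y) = free w then h.choose else w

variable {E c u free}

lemma fanNext_spec {w : V} (h : ¬ IsMissing E c u (free w)) :
    s(u, fanNext E c u free w) ∈ E ∧ c s(u, fanNext E c u free w) = free w := by
  have h' := not_isMissing_iff.1 h
  simp only [fanNext, dif_pos h']
  exact h'.choose_spec

lemma isFan_iterate (hfree : ∀ w, IsMissing E c w (free w)) {v : V} {p : ℕ}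
    (hinj : Set.InjOn ((fanNext E c u free)^[·] v) (Set.Iic p))
    (hused : ∀ i < p, ¬ IsMissing E c u (free ((fanNext E c u free)^[i] v))) :
    IsFan E c u ((fanNext E c u free)^[·] v) (fun i => free ((fanNext E c u free)^[i] v)) p where
  injOn := hinj
  mem i hi := by simpa only [Function.iterate_succ_apply'] using (fanNext_spec (hused i hi)).1
  color i hi := by simpa only [Function.iterate_succ_apply'] using (fanNext_spec (hused i hi)).2
  missing i _ := hfree _

/-- The fan returns to an earlier vertex, `z (r + 1) = z (n + 1)`, so `z r` and `z n` both miss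
`β = free (z n)`. The `(free u, β)`-Kempe path from `u` reaches at most one of them; the fan is
cut at the other one. -/
lemma exists_isProperOn_insert_of_forall_not_isMissing [Fintype V] (hc : IsProperOn E c)
    (hnd : ∀ e ∈ E, ¬ e.IsDiag) (hfree : ∀ w, IsMissing E c w (free w)) {v : V} (huv : u ≠ v)
    (he : s(u, v) ∉ E) (hused : ∀ i, ¬ IsMissing E c u (free ((fanNext E c u free)^[i] v))) :
    ∃ c' : Sym2 V → κ, IsProperOn (insert s(u, v) E) c' := by
  obtain ⟨q, n, hqn, hzq, hinj⟩ :=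
    Function.exists_iterate_eq_iterate_succ_injOn (fanNext E c u free) v
  set z : ℕ → V := ((fanNext E c u free)^[·] v) with hz
  replace hzq : z q = z (n + 1) := hzq
  have hedge (i : ℕ) : s(u, z (i + 1)) ∈ E ∧ c s(u, z (i + 1)) = free (z i) := by
    simpa only [hz, Function.iterate_succ_apply'] using fanNext_spec (hused i)
  have hzu (i : ℕ) : u ≠ z i := by
    cases i with
    | zero => exact huv
    | succ i => exact fun h => hnd _ (hedge i).1 (Sym2.mk_isDiag_iff.2 h)
  obtain ⟨r, rfl⟩ : ∃ r, q = r + 1 := Nat.exists_eq_succ_of_ne_zero <| by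
    rintro rfl
    exact he (by rw [show v = z 0 from rfl, hzq]; exact (hedge n).1)
  have hfree_rn : free (z r) = free (z n) := by
    rw [← (hedge r).2, ← (hedge n).2]
    exact congrArg (c s(u, ·)) hzq
  have hfree_eq {i : ℕ} (hi : i < n) (h : free (z i) = free (z n)) : i = r := by
    rw [← hfree_rn, ← (hedge i).2, ← (hedge r).2] at h
    have := hinj (Set.mem_Iic.2 hi) (Set.mem_Iic.2 (by omega))
      (hc.eq_of_color_eq (hedge i).1 (hedge r).1 h)
    omega
  have hfree_ne (i : ℕ) : free (z i) ≠ free u := fun h => hused i (h ▸ hfree u)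
  have hzrn : z r ≠ z n := fun h => by
    have := hinj (Set.mem_Iic.2 (by omega)) (Set.mem_Iic.2 le_rfl) h
    omega
  have hpath := SimpleGraph.Reachable.not_reachable_of_degree_le_one
    (hc.kempeGraph_degree_le_two (α := free u) (β := free (z n))) (hzu r) (hzu n) hzrn
    (hc.kempeGraph_degree_le_one (.inl (hfree u)))
    (hc.kempeGraph_degree_le_one (.inr (hfree_rn ▸ hfree (z r))))
    (hc.kempeGraph_degree_le_one (.inr (hfree (z n))))
  by_cases hr : (kempeGraph E c (free u) (free (z n))).Reachable u (z r)
  · exact (isFan_iterate hfree hinj fun i _ => hused i).exists_isProperOn_insert_of_kempe hc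
      (hfree u) (fun i _ => hfree_ne i) (fun h => hpath hr h.symm)
      (fun i hi h => hfree_eq hi h ▸ fun h' => hpath hr (hr.trans h'.symm))
  · refine (isFan_iterate (p := r) hfree (hinj.mono (Set.Iic_subset_Iic.2 (by omega)))
      fun i _ => hused i).exists_isProperOn_insert_of_kempe hc (hfree u) (fun i _ => hfree_ne i)
      ?_ ?_
    · exact hfree_rn ▸ fun h => hr h.symm
    · exact fun i hi h => absurd (hfree_eq (by omega) (h.trans hfree_rn)) (by omega)

end FanSequence

theorem IsProperOn.exists_isProperOn_insert [Fintype V] (hc : IsProperOn E c)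
    (hnd : ∀ e ∈ E, ¬ e.IsDiag) (hmiss : ∀ w, ∃ γ, IsMissing E c w γ) {u v : V} (huv : u ≠ v)
    (he : s(u, v) ∉ E) : ∃ c' : Sym2 V → κ, IsProperOn (insert s(u, v) E) c' := by
  choose free hfree using hmiss
  by_cases hI : ∃ P, IsMissing E c u (free ((fanNext E c u free)^[P] v))
  · have hmin (i : ℕ) (hi : i < Nat.find hI) := Nat.find_min hI hi
    exact (isFan_iterate hfree (Function.injOn_iterate_of_first_mem
      (S := {w | IsMissing E c u (free w)}) (Nat.find_spec hI) hmin) hmin).exists_isProperOn_insert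
      hc (Nat.find_spec hI)
  · exact exists_isProperOn_insert_of_forall_not_isMissing hc hnd hfree huv he (not_exists.1 hI)

theorem exists_isProperOn_of_edgeDegree_lt [Fintype V] [Fintype κ] (E : Finset (Sym2 V))
    (hnd : ∀ e ∈ E, ¬ e.IsDiag) (hdeg : ∀ v, edgeDegree E v < Fintype.card κ) :
    ∃ c : Sym2 V → κ, IsProperOn E c := by
  induction E using Finset.induction_on with
  | empty =>
    have (e : Sym2 V) : Nonempty κ :=
      e.ind fun a _ => Fintype.card_pos_iff.1 ((Nat.zero_le _).trans_lt (hdeg a))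
    exact ⟨fun e => (this e).some, fun e he => absurd he (notMem_empty e)⟩
  | insert e E he ih =>
    have hsub := subset_insert e E
    obtain ⟨c, hc⟩ := ih (fun f hf => hnd f (hsub hf))
      fun v => (edgeDegree_mono hsub v).trans_lt (hdeg v)
    obtain ⟨u, v⟩ := e
    exact hc.exists_isProperOn_insert (fun f hf => hnd f (hsub hf))
      (fun w => exists_isMissing c ((edgeDegree_mono hsub w).trans_lt (hdeg w)))
      (fun h => hnd _ (mem_insert_self _ _) (Sym2.mk_isDiag_iff.2 h)) he

theorem IsProperOn.exists_subset_edgeDegree_le [Fintype κ] (hc : IsProperOn E c) {t : ℕ}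
    (ht : t ≤ Fintype.card κ) :
    ∃ F ⊆ E, #E * t ≤ #F * Fintype.card κ ∧ ∀ v, edgeDegree F v ≤ t := by
  obtain ⟨T, -, rfl, hT⟩ := Finset.exists_subset_card_eq_sum_mul_le
    (fun γ => #{e ∈ E | c e = γ}) univ (ht.trans_eq card_univ.symm)
  refine ⟨{e ∈ E | c e ∈ T}, filter_subset _ _, ?_, fun v => ?_⟩
  · rw [card_eq_sum_card_fiberwise (f := c) (t := univ) (fun _ _ => mem_univ _), ← card_univ,
      card_eq_sum_card_fiberwise (f := c) (s := {e ∈ E | c e ∈ T}) (t := T)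
        (fun e he => (mem_filter.1 he).2)]
    convert hT using 3 with γ hγ
    rw [filter_filter]
    congr 1
    exact filter_congr fun e _ => ⟨And.right, fun h => ⟨h ▸ hγ, h⟩⟩
  · refine card_le_card_of_injOn c (fun e he => (mem_filter.1 (mem_filter.1 he).1).2) ?_
    intro e he f hf h
    simp only [coe_filter, mem_filter, Set.mem_ofPred_eq] at he hf
    exact hc e he.1.1 f hf.1.1 v he.2 hf.2 h

end EdgeColoring

namespace SimpleGraph

open EdgeColoring

variable {V : Type*} [Fintype V] (G : SimpleGraph V)

lemma edgeDegree_edgeFinset (v : V) : edgeDegree G.edgeFinset v = G.degree v := by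
  rw [edgeDegree, ← incidenceFinset_eq_filter, card_incidenceFinset_eq_degree]

theorem exists_isProperOn_edgeFinset :
    ∃ c : Sym2 V → Fin (G.maxDegree + 1), IsProperOn G.edgeFinset c :=
  exists_isProperOn_of_edgeDegree_lt _
    (fun _ he => G.not_isDiag_of_mem_edgeSet (mem_edgeFinset.1 he)) fun v => by
      rw [edgeDegree_edgeFinset, Fintype.card_fin]
      exact Nat.lt_succ_of_le (G.degree_le_maxDegree v)

theorem exists_subset_card_eq_edgeDegree_le {k : ℕ} (hk : k ≤ #G.edgeFinset) :
    ∃ R ⊆ G.edgeFinset, #R = k ∧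
      ∀ v, edgeDegree R v ≤ k * (G.maxDegree + 1) / #G.edgeFinset + 1 := by
  set N := G.maxDegree + 1
  set t := k * N / #G.edgeFinset + 1
  obtain ⟨c, hc⟩ := G.exists_isProperOn_edgeFinset
  obtain ⟨F, hFE, hF, hdegF⟩ := hc.exists_subset_edgeDegree_le (t := min t N)
    ((min_le_right _ _).trans_eq (Fintype.card_fin N).symm)
  rw [Fintype.card_fin] at hF
  have hkF : k ≤ #F := by
    obtain he | he := Nat.eq_zero_or_pos #G.edgeFinset
    · omega
    refine Nat.le_of_mul_le_mul_right (le_trans ?_ hF) G.maxDegree.succ_pos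
    obtain h | h := min_choice t N <;> rw [h]
    · exact (Nat.lt_mul_div_succ _ he).le
    · exact Nat.mul_le_mul_right _ hk
  obtain ⟨R, hRF, rfl⟩ := exists_subset_card_eq hkF
  exact ⟨R, hRF.trans hFE, rfl, fun v =>
    ((edgeDegree_mono hRF v).trans (hdegF v)).trans (min_le_left _ _)⟩

lemma degree_sdiff_deleteEdges_le (R : Finset (Sym2 V)) (v : V) :
    (G \ G.deleteEdges R).degree v ≤ edgeDegree R v := by
  rw [← card_neighborFinset_eq_degree]
  refine card_le_card_of_injOn (fun w => s(v, w)) (fun w hw => ?_)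
    fun _ _ _ _ h => Sym2.congr_right.1 h
  rw [mem_coe, mem_neighborFinset, sdiff_adj, deleteEdges_adj] at hw
  exact mem_filter.2 ⟨by_contra fun h => hw.2 ⟨hw.1, h⟩, Sym2.mem_mk_left _ _⟩

lemma maxDegree_sdiff_deleteEdges_le (R : Finset (Sym2 V)) {t : ℕ}
    (h : ∀ v, edgeDegree R v ≤ t) : (G \ G.deleteEdges R).maxDegree ≤ t :=
  maxDegree_le_of_forall_degree_le _ _ fun v => (G.degree_sdiff_deleteEdges_le R v).trans (h v)

end SimpleGraph

end

theorem stmt_2_general {V : Type*} [Fintype V] (H : SimpleGraph V) (m : ℕ)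
    (hme : m ≤ H.edgeFinset.card) :
    ∃ H' : SimpleGraph V, H' ≤ H ∧ H'.edgeFinset.card = m ∧
      (((H \ H').maxDegree : ℝ)) ≤
        ((H.maxDegree : ℝ) + 1) * ((H.edgeFinset.card : ℝ) - (m : ℝ)) / (H.edgeFinset.card : ℝ)
          + 1 := by
  set e := #H.edgeFinset
  set t := (e - m) * (H.maxDegree + 1) / e + 1
  obtain ⟨R, hRE, hR, hdeg⟩ := H.exists_subset_card_eq_edgeDegree_le (Nat.sub_le e m)
  refine ⟨H.deleteEdges R, H.deleteEdges_le _, ?_, ?_⟩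
  · rw [SimpleGraph.edgeFinset_deleteEdges, card_sdiff_of_subset hRE, hR]
    omega
  · have hmax := H.maxDegree_sdiff_deleteEdges_le R hdeg
    have hdiv : (((e - m) * (H.maxDegree + 1) / e : ℕ) : ℝ) ≤
        ((e - m) * (H.maxDegree + 1) : ℕ) / e := Nat.cast_div_le
    refine le_trans (b := (t : ℝ)) (Nat.cast_le.2 (by convert hmax)) ?_
    push_cast [Nat.cast_sub hme, t] at hdiv ⊢
    rw [mul_comm ((e : ℝ) - m)] at hdiv
    linarith

theorem stmt_2 {V : Type*} [Fintype V] (H : SimpleGraph V) (m : ℕ) (hm : 0 < m)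
    (hme : m ≤ H.edgeFinset.card) :
    ∃ H' : SimpleGraph V, H' ≤ H ∧ H'.edgeFinset.card = m ∧
      (((H \ H').maxDegree : ℝ)) ≤
        ((H.maxDegree : ℝ) + 1) * ((H.edgeFinset.card : ℝ) - (m : ℝ)) / (H.edgeFinset.card : ℝ)
          + 1 :=
  stmt_2_general H m hme
end

section
/- Let n ≥ 2 be an even integer. Then the edge set of the complete graph K_n can be decomposed into ⌈log₂ n⌉ edge-disjoint spanning subgraphs, each of which is regular and bipartite. -/
open scoped Classical

/-!
Write `n = 2m` and let `M` be `m` rounded up to an even number, so `⌈log₂ n⌉ = ⌈log₂ M⌉ + 1` and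
an `m`-set `V` embeds into an `M`-set `W` missing at most one vertex `w₀`. Take the vertex set of
`K_n` to be two copies `V × Bool` of `V`. By induction `K_W` decomposes into regular bipartite
`D₁, …, D_k`. Lift each `Dᵢ` by putting a copy on each side and replacing every edge `u w₀` by the
matching edge `(u, 0) (u, 1)`: the lift has the degrees of `Dᵢ` and is properly 2-coloured by
`(u, s) ↦ c(u) + s`. The edges left over are those between the two sides, minus the perfect
matching when `w₀` exists; they form one more regular bipartite graph.
-/

open Function Set

theorem Nat.clog_two_two_mul_eq_clog_two_two_mul_ceil_half_add_one {m : ℕ} (hm : 2 ≤ m) :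
    Nat.clog 2 (2 * m) = Nat.clog 2 (2 * ((m + 1) / 2)) + 1 := by
  have hdouble (k : ℕ) (hk : 1 ≤ k) : Nat.clog 2 (2 * k) = Nat.clog 2 k + 1 := by
    rw [Nat.clog_of_two_le one_lt_two (by omega)]
    congr 2
    omega
  rw [hdouble m (by omega), hdouble _ (by omega), Nat.clog_of_two_le one_lt_two hm]
  congr 3

theorem Function.injective_extend_of_subsingleton_compl {α β γ : Type*} {f : α → β}
    {g : α → γ} {e' : β → γ} (hf : Injective f) (hcompl : (range f)ᶜ.Subsingleton)
    (hg : Injective g) (he' : ∀ b ∉ range f, e' b ∉ range g) : Injective (extend f g e') := by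
  intro b₁ b₂ h
  by_cases h₁ : b₁ ∈ range f <;> by_cases h₂ : b₂ ∈ range f
  · obtain ⟨a₁, rfl⟩ := h₁
    obtain ⟨a₂, rfl⟩ := h₂
    rw [hf.extend_apply, hf.extend_apply] at h
    rw [hg h]
  · obtain ⟨a₁, rfl⟩ := h₁
    rw [hf.extend_apply, extend_apply' _ _ _ h₂] at h
    exact (he' b₂ h₂ ⟨a₁, h⟩).elim
  · obtain ⟨a₂, rfl⟩ := h₂
    rw [hf.extend_apply, extend_apply' _ _ _ h₁] at h
    exact (he' b₁ h₁ ⟨a₂, h.symm⟩).elim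
  · exact hcompl h₁ h₂

namespace SimpleGraph

variable {V W ι κ : Type*}

structure IsRegularBipartiteDecomposition [Fintype V] (H : ι → SimpleGraph V) : Prop where
  pairwise_disjoint : Pairwise fun i j => Disjoint (H i) (H j)
  iSup_eq_top : ⨆ i, H i = ⊤
  colorable : ∀ i, (H i).Colorable 2
  isRegular : ∀ i, ∃ d, (H i).IsRegularOfDegree d

namespace IsRegularBipartiteDecomposition

variable [Fintype V] [Fintype W] {H : ι → SimpleGraph V}

theorem comp_equiv (h : IsRegularBipartiteDecomposition H) (e : κ ≃ ι) :
    IsRegularBipartiteDecomposition (H ∘ e) where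
  pairwise_disjoint := h.pairwise_disjoint.comp_of_injective e.injective
  iSup_eq_top := (e.iSup_comp (g := H)).trans h.iSup_eq_top
  colorable i := h.colorable (e i)
  isRegular i := h.isRegular (e i)

theorem comap (h : IsRegularBipartiteDecomposition H) (e : W ≃ V) :
    IsRegularBipartiteDecomposition fun i => (H i).comap e where
  pairwise_disjoint _ _ hij :=
    disjoint_left.mpr fun _ _ => disjoint_left.mp (h.pairwise_disjoint hij) _ _
  iSup_eq_top := eq_top_iff.mpr fun x y hxy => by
    have hadj : (⨆ i, H i).Adj (e x) (e y) := h.iSup_eq_top ▸ e.injective.ne hxy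
    obtain ⟨i, hi⟩ := iSup_adj.mp hadj
    exact iSup_adj.mpr ⟨i, hi⟩
  colorable i := (h.colorable i).of_hom (Hom.comap e (H i))
  isRegular i := by
    obtain ⟨d, hd⟩ := h.isRegular i
    exact ⟨d, fun x => ((Iso.comap e (H i)).degree_eq x).symm.trans (hd (e x))⟩

end IsRegularBipartiteDecomposition

theorem isRegularBipartiteDecomposition_top [Fintype V] [Nonempty ι] [Subsingleton ι]
    (hV : Fintype.card V ≤ 2) :
    IsRegularBipartiteDecomposition fun _ : ι => (⊤ : SimpleGraph V) where
  pairwise_disjoint i j hij := (hij (Subsingleton.elim i j)).elim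
  iSup_eq_top := iSup_const
  colorable _ := (colorable_of_fintype _).mono hV
  isRegular _ := ⟨Fintype.card V - 1, fun v => by convert IsRegularOfDegree.top v⟩

section Doubling

variable (f : V ↪ W)

def crossGraph : SimpleGraph (V × Bool) where
  Adj x y := x.2 ≠ y.2 ∧ (x.1 = y.1 → Surjective f)
  symm := ⟨fun _ _ h => ⟨h.1.symm, fun e => h.2 e.symm⟩⟩
  loopless := ⟨fun _ h => h.1 rfl⟩

def liftGraph (D : SimpleGraph W) : SimpleGraph (V × Bool) where
  Adj x y := (x.2 = y.2 ∧ D.Adj (f x.1) (f y.1)) ∨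
    (x.2 ≠ y.2 ∧ x.1 = y.1 ∧ ∃ w ∉ range f, D.Adj (f x.1) w)
  symm := ⟨fun _ _ h => h.imp (fun h => ⟨h.1.symm, h.2.symm⟩)
    fun ⟨hne, heq, hw⟩ => ⟨hne.symm, heq.symm, heq ▸ hw⟩⟩
  loopless := ⟨fun _ h => h.elim (fun h => D.loopless.irrefl _ h.2) fun h => h.1 rfl⟩

variable {f}

@[simp] theorem crossGraph_adj {x y : V × Bool} :
    (crossGraph f).Adj x y ↔ x.2 ≠ y.2 ∧ (x.1 = y.1 → Surjective f) := Iff.rfl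

@[simp] theorem liftGraph_adj {D : SimpleGraph W} {x y : V × Bool} :
    (liftGraph f D).Adj x y ↔ (x.2 = y.2 ∧ D.Adj (f x.1) (f y.1)) ∨
      (x.2 ≠ y.2 ∧ x.1 = y.1 ∧ ∃ w ∉ range f, D.Adj (f x.1) w) := Iff.rfl

theorem disjoint_crossGraph_liftGraph (D : SimpleGraph W) :
    Disjoint (crossGraph f) (liftGraph f D) := by
  refine disjoint_left.mpr fun x y hcross hlift => ?_
  rcases hlift with ⟨hside, -⟩ | ⟨-, hu, w, hw, -⟩
  · exact hcross.1 hside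
  · exact hw (hcross.2 hu w)

theorem disjoint_liftGraph (hf : (range f)ᶜ.Subsingleton) {D D' : SimpleGraph W}
    (h : Disjoint D D') : Disjoint (liftGraph f D) (liftGraph f D') := by
  refine disjoint_left.mpr fun x y hlift hlift' => ?_
  rcases hlift with ⟨hside, hadj⟩ | ⟨hside, -, w, hw, hadj⟩ <;>
    rcases hlift' with ⟨hside', hadj'⟩ | ⟨hside', -, w', hw', hadj'⟩
  · exact disjoint_left.mp h _ _ hadj hadj'
  · exact hside' hside
  · exact hside hside'
  · exact disjoint_left.mp h _ _ hadj (hf hw' hw ▸ hadj')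

theorem crossGraph_sup_iSup_liftGraph {D : ι → SimpleGraph W} (h : ⨆ i, D i = ⊤) :
    crossGraph f ⊔ ⨆ i, liftGraph f (D i) = ⊤ := by
  have hD {w w'} (hne : w ≠ w') : ∃ i, (D i).Adj w w' := iSup_adj.mp (h ▸ hne)
  refine eq_top_iff.mpr fun ⟨u, s⟩ ⟨v, t⟩ hne => ?_
  rw [sup_adj, iSup_adj]
  by_cases hst : s = t
  · subst hst
    have huv : u ≠ v := fun huv => hne (by rw [huv])
    obtain ⟨i, hi⟩ := hD (f.injective.ne huv)
    exact Or.inr ⟨i, Or.inl ⟨rfl, hi⟩⟩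
  by_cases hcross : u = v → Surjective f
  · exact Or.inl ⟨hst, hcross⟩
  rw [Classical.not_imp] at hcross
  obtain ⟨rfl, hsurj⟩ := hcross
  obtain ⟨w, hw⟩ : ∃ w, w ∉ range f := by simpa [Surjective] using hsurj
  obtain ⟨i, hi⟩ := hD fun h => hw ⟨u, h⟩
  exact Or.inr ⟨i, Or.inr ⟨hst, rfl, w, hw, hi⟩⟩

theorem crossGraph_colorable : (crossGraph f).Colorable 2 :=
  (Coloring.mk (G := crossGraph f) (fun x => x.2) fun h => h.1).colorable

theorem Colorable.liftGraph {D : SimpleGraph W} (h : D.Colorable 2) :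
    (liftGraph f D).Colorable 2 := by
  obtain ⟨C⟩ := h
  refine ⟨Coloring.mk (fun x => C (f x.1) + if x.2 then 1 else 0) ?_⟩
  rintro ⟨u, s⟩ ⟨v, t⟩ (⟨rfl, hadj⟩ | ⟨hst, rfl, -⟩) hcolor
  · exact C.valid hadj (add_right_cancel hcolor)
  · cases s <;> cases t <;> simp_all

variable [Fintype V] [Fintype W]

theorem crossGraph_isRegularOfDegree :
    (crossGraph f).IsRegularOfDegree
      (if Surjective f then Fintype.card V else Fintype.card V - 1) := by
  rintro ⟨u, s⟩
  have hnbr : (crossGraph f).neighborFinset (u, s) =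
      ({v | u = v → Surjective f} : Finset V).map ⟨(·, !s), fun _ _ h => congrArg Prod.fst h⟩ := by
    ext ⟨v, t⟩
    cases s <;> cases t <;> simp
  rw [← card_neighborFinset_eq_degree, hnbr, Finset.card_map]
  split_ifs with hsurj
  · simp [hsurj]
  · simp [hsurj, Finset.filter_ne]

/-- The neighbour of `(u, s)` coming from `w` is `(v, s)` if `w = f v`, and `(u, !s)` otherwise. -/
theorem neighborFinset_liftGraph (D : SimpleGraph W) (u : V) (s : Bool) :
    (liftGraph f D).neighborFinset (u, s) =
      (D.neighborFinset (f u)).image (extend f (·, s) fun _ => (u, !s)) := by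
  ext ⟨v, t⟩
  simp only [mem_neighborFinset, liftGraph_adj, Finset.mem_image]
  constructor
  · rintro (⟨rfl, hadj⟩ | ⟨hst, rfl, w, hw, hadj⟩)
    · exact ⟨f v, hadj, by rw [f.injective.extend_apply]⟩
    · refine ⟨w, hadj, ?_⟩
      rw [extend_apply' _ _ _ hw]
      cases s <;> cases t <;> simp_all
  · rintro ⟨w, hadj, hw⟩
    by_cases hwf : w ∈ range f
    · obtain ⟨a, rfl⟩ := hwf
      rw [f.injective.extend_apply, Prod.mk.injEq] at hw
      obtain ⟨rfl, rfl⟩ := hw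
      exact Or.inl ⟨rfl, hadj⟩
    · rw [extend_apply' _ _ _ hwf, Prod.mk.injEq] at hw
      obtain ⟨rfl, rfl⟩ := hw
      exact Or.inr ⟨by simp, rfl, w, hwf, hadj⟩

theorem degree_liftGraph (hf : (range f)ᶜ.Subsingleton) (D : SimpleGraph W) (u : V)
    (s : Bool) : (liftGraph f D).degree (u, s) = D.degree (f u) := by
  have hinj : Injective (extend f (·, s) fun _ => (u, !s)) :=
    injective_extend_of_subsingleton_compl f.injective hf (fun _ _ h => congrArg Prod.fst h)
      fun _ _ ⟨_, h⟩ => by simp at h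
  rw [← card_neighborFinset_eq_degree, neighborFinset_liftGraph,
    Finset.card_image_of_injective _ hinj, card_neighborFinset_eq_degree]

theorem IsRegularOfDegree.liftGraph (hf : (range f)ᶜ.Subsingleton) {D : SimpleGraph W} {d : ℕ}
    (h : D.IsRegularOfDegree d) : (liftGraph f D).IsRegularOfDegree d :=
  fun ⟨u, s⟩ => (degree_liftGraph hf D u s).trans (h (f u))

end Doubling

theorem IsRegularBipartiteDecomposition.doubling [Fintype V] [Fintype W] {f : V ↪ W}
    (hf : (range f)ᶜ.Subsingleton) {D : ι → SimpleGraph W}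
    (h : IsRegularBipartiteDecomposition D) :
    IsRegularBipartiteDecomposition fun o : Option ι =>
      o.elim (crossGraph f) fun i => liftGraph f (D i) where
  pairwise_disjoint := by
    rintro (_ | i) (_ | j) hij
    · exact (hij rfl).elim
    · exact disjoint_crossGraph_liftGraph _
    · exact (disjoint_crossGraph_liftGraph _).symm
    · exact disjoint_liftGraph hf (h.pairwise_disjoint fun hij' => hij (congrArg some hij'))
  iSup_eq_top := by
    rw [iSup_option_elim]
    exact crossGraph_sup_iSup_liftGraph h.iSup_eq_top
  colorable := by
    rintro (_ | i)
    exacts [crossGraph_colorable, (h.colorable i).liftGraph]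
  isRegular := by
    rintro (_ | i)
    · exact ⟨_, crossGraph_isRegularOfDegree⟩
    · obtain ⟨d, hd⟩ := h.isRegular i
      exact ⟨d, hd.liftGraph hf⟩

theorem exists_isRegularBipartiteDecomposition_fin (n : ℕ) (hn : 2 ≤ n) (heven : Even n) :
    ∃ H : Fin (Nat.clog 2 n) → SimpleGraph (Fin n), IsRegularBipartiteDecomposition H := by
  induction n using Nat.strong_induction_on with
  | _ n ih =>
  obtain ⟨m, rfl⟩ := heven.two_dvd
  obtain rfl | hm := (show 1 ≤ m by omega).eq_or_lt
  · exact ⟨_, (isRegularBipartiteDecomposition_top (by simp)).comp_equiv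
      (finCongr (Nat.clog_eq_one le_rfl le_rfl))⟩
  set M := 2 * ((m + 1) / 2)
  obtain ⟨D, hD⟩ := ih M (by omega) (by omega) (even_two_mul _)
  have hmM : m ≤ M := by omega
  have hf : (range (Fin.castLEEmb hmM))ᶜ.Subsingleton := by
    intro w hw w' hw'
    simp only [Fin.coe_castLEEmb, Fin.range_castLE, mem_compl_iff, mem_ofPred_eq] at hw hw'
    omega
  have hlog := Nat.clog_two_two_mul_eq_clog_two_two_mul_ceil_half_add_one hm
  have hV : Fintype.card (Fin (2 * m)) = Fintype.card (Fin m × Bool) := by simp [mul_comm]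
  exact ⟨_, ((hD.doubling hf).comp_equiv ((finCongr hlog).trans (finSuccEquiv _))).comap
    (Fintype.equivOfCardEq hV)⟩

end SimpleGraph

theorem stmt_5 (n : ℕ) (hn : 2 ≤ n) (heven : Even n) :
    ∃ Hs : Fin (Nat.clog 2 n) → SimpleGraph (Fin n),
      (∀ i j, i ≠ j → Disjoint (Hs i).edgeSet (Hs j).edgeSet) ∧
      (⋃ i, (Hs i).edgeSet) = (⊤ : SimpleGraph (Fin n)).edgeSet ∧
      (∀ i, (Hs i).Colorable 2) ∧
      (∀ i, ∃ r, (Hs i).IsRegularOfDegree r) := by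
  obtain ⟨H, hH⟩ := SimpleGraph.exists_isRegularBipartiteDecomposition_fin n hn heven
  refine ⟨H, fun i j hij => SimpleGraph.disjoint_edgeSet.mpr (hH.pairwise_disjoint hij), ?_,
    hH.colorable, hH.isRegular⟩
  rw [← SimpleGraph.edgeSet_iSup, hH.iSup_eq_top]
end

section
/- Let H = (X ∪ Y, E) be a finite bipartite graph with parts X and Y, and let f : X ∪ Y → ℕ satisfy f(X) = f(Y), where f(S) = Σ_{v∈S} f(v). Then H has an f-factor (a spanning subgraph in which every vertex v has degree exactly f(v)) if and only if for every S ⊆ X and T ⊆ Y, the number of edges between S and T satisfies e_H(S, T) ≥ f(S) + f(T) - f(X). -/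
/-!
Necessity is double counting: in an `f`-factor `G`, `f(S) + f(T) = e_G(S, Y) + e_G(X, T)`, which
exceeds `e_G(X, Y) = f(X)` by at most `e_G(S, T) ≤ e_H(S, T)`.

Sufficiency is by induction on `f(X)`. Call `(S, T)` tight if Ore's inequality is an equality.
Fix `x ∈ X` with `f x > 0`. By submodularity of `e_H`, tight pairs with `x ∉ S` are closed under
`(S, T), (S', T') ↦ (S ∪ S', T ∩ T')`, so there is a tight `(S₀, T₀)` whose `T₀` lies in every
tight `T`. Ore's inequality for `(S₀ ∪ {x}, {w ∈ T₀ | f w > 0})` then gives an edge `xy` with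
`y ∈ T₀` and `f y > 0`. Deleting `xy` and lowering `f` by one at `x` and `y` preserves Ore's condition,
since the only pairs that lose slack, those with `x ∉ S` and `y ∉ T`, are not tight; add `xy`
back to the factor supplied by induction.
-/

open scoped Classical

open Finset SimpleGraph

namespace Rel

variable {α β : Type*} (r : α → β → Prop) [∀ a, DecidablePred (r a)]

theorem card_interedges_eq_sum (s : Finset α) (t : Finset β) :
    #(interedges r s t) = ∑ a ∈ s, #{b ∈ t | r a b} := by
  simp only [interedges, card_filter, sum_product]

variable [DecidableEq α] [DecidableEq β]

theorem card_interedges_add_card_interedges_le_union_inter (s s' : Finset α) (t t' : Finset β) :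
    #(interedges r s t) + #(interedges r s' t') ≤
      #(interedges r (s ∪ s') (t ∪ t')) + #(interedges r (s ∩ s') (t ∩ t')) := by
  rw [← card_union_add_card_inter]
  refine add_le_add (card_le_card ?_) (card_le_card ?_)
  · exact union_subset (interedges_mono subset_union_left subset_union_left)
      (interedges_mono subset_union_right subset_union_right)
  · intro p
    simp only [mem_inter, mem_interedges_iff]
    tauto

theorem card_interedges_union_inter_add_card_interedges_inter_union_le
    (s s' : Finset α) (t t' : Finset β) :
    #(interedges r (s ∪ s') (t ∩ t')) + #(interedges r (s ∩ s') (t ∪ t')) ≤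
      #(interedges r s t) + #(interedges r s' t') := by
  rw [← card_union_add_card_inter (interedges r s t), ← card_union_add_card_inter]
  refine add_le_add (card_le_card ?_) (card_le_card ?_)
  all_goals
    intro p
    simp only [mem_union, mem_inter, mem_interedges_iff]
    tauto

end Rel

namespace SimpleGraph

variable {V : Type*} {G H : SimpleGraph V} {X Y S T : Finset V} {x y : V} {f g : V → ℕ}

theorem IsBipartiteWith.mono {s t : Set V} (h : H.IsBipartiteWith s t) (hle : G ≤ H) :
    G.IsBipartiteWith s t :=
  ⟨h.disjoint, fun _ _ hadj => h.mem_of_adj (hle hadj)⟩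

theorem card_interedges_le_of_le_sup_edge {G' : SimpleGraph V} (hle : G ≤ G' ⊔ edge x y)
    (hyS : y ∉ S) :
    #(G.interedges S T) ≤ #(G'.interedges S T) + if x ∈ S ∧ y ∈ T then 1 else 0 := by
  split_ifs with h
  · refine (card_le_card fun p hp => ?_).trans (card_insert_le (x, y) _)
    simp only [mem_insert, mem_interedges_iff] at hp ⊢
    have := hle hp.2.2
    simp only [sup_adj, edge_adj] at this
    grind
  · refine card_le_card fun p hp => ?_
    simp only [mem_interedges_iff] at hp ⊢
    have := hle hp.2.2
    simp only [sup_adj, edge_adj] at this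
    grind

/-- Ore's condition, with `f(X)` moved to the right so that it can be stated in `ℕ`. -/
def OreCondition (H : SimpleGraph V) (X Y : Finset V) (f : V → ℕ) : Prop :=
  ∀ S ⊆ X, ∀ T ⊆ Y, ∑ v ∈ S, f v + ∑ v ∈ T, f v ≤ #(H.interedges S T) + ∑ v ∈ X, f v

def IsOreTight (H : SimpleGraph V) (X : Finset V) (f : V → ℕ) (S T : Finset V) : Prop :=
  ∑ v ∈ S, f v + ∑ v ∈ T, f v = #(H.interedges S T) + ∑ v ∈ X, f v

theorem sum_add_single_add_single (g : V → ℕ) (x y : V) (s : Finset V) :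
    ∑ v ∈ s, (g + Pi.single x 1 + Pi.single y 1 : V → ℕ) v =
      ∑ v ∈ s, g v + (if x ∈ s then 1 else 0) + if y ∈ s then 1 else 0 := by
  simp only [Pi.add_apply, sum_add_distrib, sum_pi_single']

namespace OreCondition

theorem isOreTight_union_inter {S' T' : Finset V} (hore : OreCondition H X Y f) (hS : S ⊆ X)
    (hS' : S' ⊆ X) (hT : T ⊆ Y) (hT' : T' ⊆ Y) (h : IsOreTight H X f S T)
    (h' : IsOreTight H X f S' T') : IsOreTight H X f (S ∪ S') (T ∩ T') := by
  have hle := hore (S ∪ S') (union_subset hS hS') (T ∩ T') (inter_subset_left.trans hT)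
  have hge := hore (S ∩ S') (inter_subset_left.trans hS) (T ∪ T') (union_subset hT hT')
  have hsub : #(H.interedges (S ∪ S') (T ∩ T')) + #(H.interedges (S ∩ S') (T ∪ T')) ≤
      #(H.interedges S T) + #(H.interedges S' T') :=
    Rel.card_interedges_union_inter_add_card_interedges_inter_union_le H.Adj S S' T T'
  have hfS := sum_union_inter (s₁ := S) (s₂ := S') (f := f)
  have hfT := sum_union_inter (s₁ := T) (s₂ := T') (f := f)
  unfold IsOreTight at *
  omega

theorem exists_adj_forall_isOreTight (hore : OreCondition H X Y f)
    (hf : ∑ v ∈ X, f v = ∑ v ∈ Y, f v) (hx : x ∈ X) (hfx : f x ≠ 0) :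
    ∃ y ∈ Y, H.Adj x y ∧ f y ≠ 0 ∧
      ∀ S ⊆ X, ∀ T ⊆ Y, x ∉ S → IsOreTight H X f S T → y ∈ T := by
  let tight : Finset (Finset V × Finset V) :=
    {p ∈ X.powerset ×ˢ Y.powerset | x ∉ p.1 ∧ IsOreTight H X f p.1 p.2}
  have hne : tight.Nonempty := ⟨(∅, Y), by simp [tight, IsOreTight, hf]⟩
  obtain ⟨⟨S₀, T₀⟩, h₀, hmin⟩ := exists_min_image tight (fun p => #p.2) hne
  simp only [tight, mem_filter, mem_product, mem_powerset, and_imp, Prod.forall] at h₀ hmin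
  obtain ⟨⟨hS₀, hT₀⟩, hxS₀, htight₀⟩ := h₀
  have hT₀_subset : ∀ S ⊆ X, ∀ T ⊆ Y, x ∉ S → IsOreTight H X f S T → T₀ ⊆ T := by
    intro S hS T hT hxS hST
    have hcard := hmin (S₀ ∪ S) (T₀ ∩ T) (union_subset hS₀ hS) (inter_subset_left.trans hT₀)
      (by simp [hxS₀, hxS]) (hore.isOreTight_union_inter hS₀ hS hT₀ hT htight₀ hST)
    rw [← eq_of_subset_of_card_le inter_subset_left hcard]
    exact inter_subset_right
  set T₁ := {w ∈ T₀ | f w ≠ 0}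
  obtain ⟨y, hy⟩ : ({w ∈ T₁ | H.Adj x w}).Nonempty := by
    have hore₁ := hore (insert x S₀) (insert_subset hx hS₀) T₁ ((filter_subset _ _).trans hT₀)
    rw [sum_insert hxS₀, sum_filter_ne_zero, interedges, Rel.card_interedges_eq_sum,
      sum_insert hxS₀, ← Rel.card_interedges_eq_sum] at hore₁
    have hmono : #(H.interedges S₀ T₁) ≤ #(H.interedges S₀ T₀) :=
      card_le_card (H.interedges_mono subset_rfl (filter_subset _ _))
    unfold IsOreTight at htight₀
    rw [← card_pos]
    change _ ≤ _ + #(H.interedges S₀ T₁) + _ at hore₁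
    omega
  simp only [T₁, mem_filter] at hy
  exact ⟨y, hT₀ hy.1.1, hy.2, hy.1.2,
    fun S hS T hT hxS hST => hT₀_subset S hS T hT hxS hST hy.1.1⟩

theorem sdiff_edge (hore : OreCondition H X Y f) (hdisj : Disjoint X Y) (hx : x ∈ X) (hy : y ∈ Y)
    (hfg : f = g + Pi.single x 1 + Pi.single y 1)
    (htight : ∀ S ⊆ X, ∀ T ⊆ Y, x ∉ S → IsOreTight H X f S T → y ∈ T) :
    OreCondition (H \ edge x y) X Y g := by
  subst hfg
  intro S hS T hT
  have hyS : y ∉ S := fun h => Finset.disjoint_left.mp hdisj (hS h) hy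
  have hxT : x ∉ T := fun h => Finset.disjoint_left.mp hdisj hx (hT h)
  have hyX : y ∉ X := Finset.disjoint_right.mp hdisj hy
  have hedges := card_interedges_le_of_le_sup_edge (T := T)
    (le_sdiff_sup : H ≤ H \ edge x y ⊔ edge x y) hyS
  have hore_ST := hore S hS T hT
  have htight_ST := htight S hS T hT
  have hfX := sum_add_single_add_single g x y X
  have hfS := sum_add_single_add_single g x y S
  have hfT := sum_add_single_add_single g x y T
  unfold IsOreTight at htight_ST
  simp only [hx, hyS, hxT, hyX, if_true, if_false] at hfX hfS hfT
  by_cases hxS : x ∈ S <;> by_cases hyT : y ∈ T <;>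
    simp only [hxS, hyT, and_true, and_false, if_true, if_false, not_true, not_false_eq_true,
      forall_const, imp_false] at hfS hfT hedges htight_ST <;>
    omega

end OreCondition

theorem degree_edge (hxy : x ≠ y) (v : V) [Fintype ((edge x y).neighborSet v)] :
    (edge x y).degree v = (Pi.single x 1 : V → ℕ) v + (Pi.single y 1 : V → ℕ) v := by
  rw [← card_neighborFinset_eq_degree]
  rcases eq_or_ne v x with rfl | hvx
  · rw [show (edge v y).neighborFinset v = {y} by
      ext; simp only [mem_neighborFinset, edge_adj, mem_singleton]; grind]
    simp [hxy.symm]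
  rcases eq_or_ne v y with rfl | hvy
  · rw [show (edge x v).neighborFinset v = {x} by
      ext; simp only [mem_neighborFinset, edge_adj, mem_singleton]; grind]
    simp [hxy]
  · rw [show (edge x y).neighborFinset v = ∅ by
      ext; simp only [mem_neighborFinset, edge_adj, notMem_empty]; grind]
    simp [hvx, hvy]

variable [Fintype V]

theorem degree_sup_edge (hxy : x ≠ y) (hG : ¬G.Adj x y) (v : V)
    [Fintype ((G ⊔ edge x y).neighborSet v)] [Fintype (G.neighborSet v)] :
    (G ⊔ edge x y).degree v =
      G.degree v + (Pi.single x 1 : V → ℕ) v + (Pi.single y 1 : V → ℕ) v := by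
  simp only [add_assoc, ← degree_edge hxy, ← card_neighborFinset_eq_degree]
  rw [← card_union_of_disjoint
    (disjoint_neighborFinset_of_disjoint _ _ _ ((disjoint_edge G).mpr hG))]
  congr 1
  ext w
  simp

theorem IsBipartiteWith.sum_degree_eq_card_interedges (h : G.IsBipartiteWith X Y) (hS : S ⊆ X) :
    ∑ v ∈ S, G.degree v = #(G.interedges S Y) := by
  rw [interedges, Rel.card_interedges_eq_sum]
  refine sum_congr rfl fun v hv => ?_
  rw [← card_neighborFinset_eq_degree, isBipartiteWith_neighborFinset h (hS hv)]

theorem oreCondition_of_le_of_degree_eq (hbip : H.IsBipartiteWith X Y) (hle : G ≤ H)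
    (hdeg : ∀ v, G.degree v = f v) : OreCondition H X Y f := by
  intro S hS T hT
  have hbipG := hbip.mono hle
  have hfS : ∑ v ∈ S, f v = #(G.interedges S Y) := by
    simp_rw [← hdeg]
    exact hbipG.sum_degree_eq_card_interedges hS
  have hfT : ∑ v ∈ T, f v = #(G.interedges X T) := by
    have := G.symm
    simp_rw [← hdeg, interedges, Rel.card_interedges_comm X]
    exact hbipG.symm.sum_degree_eq_card_interedges hT
  have hfX : ∑ v ∈ X, f v = #(G.interedges X Y) := by
    simp_rw [← hdeg]
    exact hbipG.sum_degree_eq_card_interedges subset_rfl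
  have hsplit : #(G.interedges S Y) + #(G.interedges X T) ≤
      #(G.interedges X Y) + #(G.interedges S T) := by
    simpa only [interedges, union_eq_right.mpr hS, inter_eq_left.mpr hS, union_eq_left.mpr hT,
      inter_eq_right.mpr hT] using
      Rel.card_interedges_add_card_interedges_le_union_inter G.Adj S X Y T
  have hGH : #(G.interedges S T) ≤ #(H.interedges S T) :=
    card_le_card fun p hp => by
      rw [mem_interedges_iff] at hp ⊢
      exact ⟨hp.1, hp.2.1, hle hp.2.2⟩
  omega

theorem OreCondition.exists_le_degree_eq (hbip : H.IsBipartiteWith X Y)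
    (hunion : X ∪ Y = univ) (hf : ∑ v ∈ X, f v = ∑ v ∈ Y, f v) (hore : OreCondition H X Y f) :
    ∃ G ≤ H, ∀ v, G.degree v = f v := by
  obtain ⟨n, hn⟩ : ∃ n, ∑ v ∈ X, f v = n := ⟨_, rfl⟩
  induction n generalizing H f with
  | zero =>
    refine ⟨⊥, bot_le, fun v => ?_⟩
    have hfv : f v = 0 := by
      rcases mem_union.mp (hunion ▸ mem_univ v) with hv | hv
      · exact sum_eq_zero_iff.mp hn v hv
      · exact sum_eq_zero_iff.mp (hf ▸ hn) v hv
    simp [hfv]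
  | succ n ih =>
    obtain ⟨x, hx, hfx⟩ := exists_ne_zero_of_sum_ne_zero (hn.trans_ne n.succ_ne_zero)
    obtain ⟨y, hy, hxy, hfy, htight⟩ := hore.exists_adj_forall_isOreTight hf hx hfx
    set g := f - Pi.single x 1 - Pi.single y 1
    have hfg : f = g + Pi.single x 1 + Pi.single y 1 := by
      ext v
      rcases eq_or_ne v x with rfl | hvx
      · simp [g, hxy.ne]
        omega
      rcases eq_or_ne v y with rfl | hvy
      · simp [g, hvx]
        omega
      · simp [g, hvx, hvy]
    have hdisj := disjoint_coe.mp hbip.disjoint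
    have hfX := sum_add_single_add_single g x y X
    have hfY := sum_add_single_add_single g x y Y
    simp only [hx, hy, Finset.disjoint_left.mp hdisj hx, Finset.disjoint_right.mp hdisj hy,
      if_true, if_false, ← hfg] at hfX hfY
    obtain ⟨G, hle, hdeg⟩ := ih (hbip.mono sdiff_le) (by omega)
      (hore.sdiff_edge hdisj hx hy hfg htight) (by omega)
    have hG : ¬G.Adj x y := fun h =>
      ((sdiff_adj _ _ _ _).mp (hle h)).2 (by simp [edge_adj, hxy.ne])
    refine ⟨G ⊔ edge x y, sup_le (hle.trans sdiff_le) ((edge_le_iff H).mpr (Or.inr hxy)),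
      fun v => ?_⟩
    rw [degree_sup_edge hxy.ne hG, hdeg, hfg]
    rfl

end SimpleGraph

theorem stmt_6 {V : Type*} [Fintype V] (H : SimpleGraph V) (X Y : Finset V)
    (hdisj : Disjoint X Y) (hunion : X ∪ Y = Finset.univ)
    (hbip : ∀ u v, H.Adj u v → (u ∈ X ∧ v ∈ Y) ∨ (u ∈ Y ∧ v ∈ X))
    (f : V → ℕ) (hf : ∑ v ∈ X, f v = ∑ v ∈ Y, f v) :
    (∃ H' : SimpleGraph V, H' ≤ H ∧ ∀ v, H'.degree v = f v) ↔
      ∀ S ⊆ X, ∀ T ⊆ Y,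
        ((((S ×ˢ T).filter fun p => H.Adj p.1 p.2).card : ℤ)) ≥
          (∑ v ∈ S, (f v : ℤ)) + (∑ v ∈ T, (f v : ℤ)) - ∑ v ∈ X, (f v : ℤ) := by
  have hbip' : H.IsBipartiteWith X Y :=
    ⟨disjoint_coe.mpr hdisj, fun u v h => by simpa using hbip u v h⟩
  have hore_iff : OreCondition H X Y f ↔ ∀ S ⊆ X, ∀ T ⊆ Y,
      ((((S ×ˢ T).filter fun p => H.Adj p.1 p.2).card : ℤ)) ≥
        (∑ v ∈ S, (f v : ℤ)) + (∑ v ∈ T, (f v : ℤ)) - ∑ v ∈ X, (f v : ℤ) := by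
    refine forall₂_congr fun S _ => forall₂_congr fun T _ => ?_
    simp only [interedges_def, ← Nat.cast_sum]
    omega
  rw [← hore_iff]
  exact ⟨fun ⟨G, hle, hdeg⟩ => oreCondition_of_le_of_degree_eq hbip' hle hdeg,
    fun h => h.exists_le_degree_eq hbip' hunion hf⟩
end

section
/- Let G be a d-regular graph on [n] with d sufficiently large and n ≥ d+1 even. Then there exists a balanced bipartition {X, Y} of [n] such that each of the three graphs G[X,Y], G[X], and G[Y] satisfies: every vertex has degree in that graph equal to d/2 ± d^{2/3}. -/
/-!
Fix a perfect matching `e : α × Bool ≃ W` of the vertex set and let a uniformly random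
`f : α → Bool` pick one end of every matching edge; these ends form the bisection `X`.
Twice the degree of `v` into `X`, minus `d`, is a sum of independent `±1` terms, one for each
matching edge with exactly one end in `N(v)`, so by Hoeffding the degree leaves
`d/2 ± d^{2/3}` with probability at most `2 exp(-2 d^{1/3})`. This event is determined by the
at most `d` matching edges meeting `N(v)`, so it is independent of all but `2d²` of the others,
and the symmetric local lemma, which needs probability `≤ 1/(4(2d² + 1))`, applies for large
`d`. The degree into `Y = Xᶜ` is `d` minus the degree into `X`. Probabilities are proportions
of `α → Bool` throughout.
-/

open scoped Classical
open Finset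

section LovaszLocalLemma

variable {V β ι : Type*} [Fintype V] [Fintype β]

lemma card_mul_card_eq_card_inter_mul_card {S T : Set V} (hST : Disjoint S T)
    {A B : Finset (V → β)} (hA : DependsOn (· ∈ A) S) (hB : DependsOn (· ∈ B) T) :
    #A * #B = #(A ∩ B) * Fintype.card (V → β) := by
  have hT : ∀ i ∈ T, i ∉ S := fun i hi hiS => hST.ne_of_mem hiS hi rfl
  -- exchanging the `S`-coordinates of a pair is an involution carrying
  -- `A ×ˢ B` onto `(A ∩ B) ×ˢ univ`
  let swap (p : (V → β) × (V → β)) : (V → β) × (V → β) :=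
    (S.piecewise p.1 p.2, S.piecewise p.2 p.1)
  have swap_swap (p) : swap (swap p) = p := by
    ext i <;> by_cases hi : i ∈ S <;> simp [swap, hi]
  rw [← card_univ, ← card_product, ← card_product]
  refine card_nbij' swap swap (fun p hp => ?_) (fun q hq => ?_) (fun p _ => swap_swap p)
    (fun q _ => swap_swap q)
  · simp only [coe_product, Set.mem_prod, mem_coe, coe_inter, Set.mem_inter_iff, coe_univ,
      Set.mem_univ, and_true] at hp ⊢
    exact ⟨(hA fun i hi => by simp [swap, hi]).mp hp.1,
      (hB fun i hi => by simp [swap, hT i hi]).mp hp.2⟩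
  · simp only [coe_product, Set.mem_prod, mem_coe, coe_inter, Set.mem_inter_iff, coe_univ,
      Set.mem_univ, and_true] at hq ⊢
    exact ⟨(hA fun i hi => by simp [swap, hi]).mp hq.1,
      (hB (x := q.1) fun i hi => by simp [swap, hT i hi]).mp hq.2⟩

variable {A : ι → Finset (V → β)}

noncomputable def avoiding (A : ι → Finset (V → β)) (T : Finset ι) : Finset (V → β) :=
  univ.filter fun f => ∀ j ∈ T, f ∉ A j

lemma avoiding_empty : avoiding A ∅ = univ := by simp [avoiding]

lemma avoiding_anti {T T' : Finset ι} (h : T' ⊆ T) : avoiding A T ⊆ avoiding A T' :=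
  fun f hf => by simp only [avoiding, mem_filter] at hf ⊢; exact ⟨hf.1, fun j hj => hf.2 j (h hj)⟩

lemma card_avoiding_eq_card_avoiding_insert_add (T : Finset ι) (j : ι) :
    #(avoiding A T) = #(avoiding A (insert j T)) + #(A j ∩ avoiding A T) := by
  have h₁ : avoiding A (insert j T) = (avoiding A T).filter (· ∉ A j) := by
    ext f; simp [avoiding, and_comm]
  have h₂ : A j ∩ avoiding A T = (avoiding A T).filter (· ∈ A j) := by
    ext f; simp [avoiding, and_comm]
  rw [h₁, h₂, add_comm, card_filter_add_card_filter_not]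

lemma dependsOn_mem_avoiding {S : ι → Set V} (hA : ∀ i, DependsOn (· ∈ A i) (S i))
    (T : Finset ι) : DependsOn (· ∈ avoiding A T) (⋃ j ∈ T, S j) := by
  intro f g hfg
  simp only [avoiding, mem_filter, mem_univ, true_and]
  exact propext <| forall₂_congr fun j hj =>
    not_congr (Iff.of_eq (hA j fun i hi => hfg i (Set.mem_biUnion hj hi)))

variable {x : ℝ}

lemma one_sub_mul_card_avoiding_le (T : Finset ι) (j : ι)
    (h : (#(A j ∩ avoiding A T) : ℝ) ≤ x * #(avoiding A T)) :
    (1 - x) * #(avoiding A T) ≤ #(avoiding A (insert j T)) := by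
  have hsplit : (#(avoiding A T) : ℝ) = #(avoiding A (insert j T)) + #(A j ∩ avoiding A T) := by
    exact_mod_cast card_avoiding_eq_card_avoiding_insert_add T j
  linarith

lemma one_sub_pow_mul_card_avoiding_le (hx : x ≤ 1) (U B : Finset ι)
    (h : ∀ B' ⊂ B, ∀ j, (#(A j ∩ avoiding A (U ∪ B')) : ℝ) ≤ x * #(avoiding A (U ∪ B'))) :
    (1 - x) ^ #B * #(avoiding A U) ≤ #(avoiding A (U ∪ B)) := by
  induction B using Finset.induction_on with
  | empty => simp
  | insert j B hjB ih =>
    have ih' := ih fun B' hB' => h B' (hB'.trans_subset (subset_insert j B))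
    rw [card_insert_of_notMem hjB, pow_succ', mul_assoc, union_insert]
    calc (1 - x) * ((1 - x) ^ #B * #(avoiding A U))
        ≤ (1 - x) * #(avoiding A (U ∪ B)) := mul_le_mul_of_nonneg_left ih' (by linarith)
      _ ≤ _ := one_sub_mul_card_avoiding_le _ j (h B (ssubset_insert hjB) j)

variable [Fintype ι] [Nonempty β] {S : ι → Set V} {D : ℕ}

lemma card_inter_avoiding_le (hA : ∀ i, DependsOn (· ∈ A i) (S i)) (hx₀ : 0 ≤ x) (hx₁ : x ≤ 1)
    (hp : ∀ i, (#(A i) : ℝ) ≤ x * (1 - x) ^ D * Fintype.card (V → β))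
    (hD : ∀ i, #{j | ¬Disjoint (S j) (S i)} ≤ D) (T : Finset ι) (i : ι) :
    (#(A i ∩ avoiding A T) : ℝ) ≤ x * #(avoiding A T) := by
  induction T using Finset.strongInduction generalizing i with
  | H T ih =>
  set T₁ := T.filter fun j => ¬Disjoint (S j) (S i)
  set T₂ := T.filter fun j => Disjoint (S j) (S i)
  have hT : T₂ ∪ T₁ = T := filter_union_filter_not_eq _ _
  have hindep : #(A i) * #(avoiding A T₂) = #(A i ∩ avoiding A T₂) * Fintype.card (V → β) := by
    refine card_mul_card_eq_card_inter_mul_card ?_ (hA i) (dependsOn_mem_avoiding hA T₂)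
    exact Set.disjoint_iUnion₂_right.2 fun j hj => (mem_filter.1 hj).2.symm
  have hT₂ : (#(A i ∩ avoiding A T₂) : ℝ) ≤ x * (1 - x) ^ D * #(avoiding A T₂) := by
    have hΩ : (0 : ℝ) < Fintype.card (V → β) := by exact_mod_cast Fintype.card_pos
    refine le_of_mul_le_mul_right ?_ hΩ
    rw [mul_right_comm, ← Nat.cast_mul, ← hindep, Nat.cast_mul]
    gcongr
    exact hp i
  have hpeel : (1 - x) ^ #T₁ * #(avoiding A T₂) ≤ #(avoiding A T) := by
    rw [← hT]
    refine one_sub_pow_mul_card_avoiding_le hx₁ T₂ T₁ fun B hB j => ih _ ?_ j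
    obtain ⟨k, hkT₁, hkB⟩ := exists_of_ssubset hB
    refine (ssubset_iff_of_subset ((union_subset_union_right hB.subset).trans hT.subset)).2
      ⟨k, mem_of_mem_filter k hkT₁, ?_⟩
    exact notMem_union.2 ⟨fun hk => (mem_filter.1 hkT₁).2 (mem_filter.1 hk).2, hkB⟩
  have hT₁ : #T₁ ≤ D := (card_le_card (filter_subset_filter _ (subset_univ T))).trans (hD i)
  calc (#(A i ∩ avoiding A T) : ℝ) ≤ #(A i ∩ avoiding A T₂) := by
        gcongr; exact avoiding_anti (filter_subset _ _)
    _ ≤ x * (1 - x) ^ D * #(avoiding A T₂) := hT₂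
    _ ≤ x * ((1 - x) ^ #T₁ * #(avoiding A T₂)) := by
        rw [← mul_assoc]
        gcongr _ * ?_ * _
        exact pow_le_pow_of_le_one (by linarith) (by linarith) hT₁
    _ ≤ x * #(avoiding A T) := by gcongr

theorem exists_forall_notMem_of_card_le (hA : ∀ i, DependsOn (· ∈ A i) (S i)) (hx₀ : 0 ≤ x)
    (hx₁ : x < 1) (hp : ∀ i, (#(A i) : ℝ) ≤ x * (1 - x) ^ D * Fintype.card (V → β))
    (hD : ∀ i, #{j | ¬Disjoint (S j) (S i)} ≤ D) :
    ∃ f : V → β, ∀ i, f ∉ A i := by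
  have key := one_sub_pow_mul_card_avoiding_le hx₁.le ∅ univ fun B _ j =>
    card_inter_avoiding_le hA hx₀ hx₁.le hp hD _ j
  rw [avoiding_empty, empty_union, card_univ] at key
  have hpos : (0 : ℝ) < #(avoiding A univ) :=
    (mul_pos (pow_pos (sub_pos.2 hx₁) _) (by exact_mod_cast Fintype.card_pos)).trans_le key
  obtain ⟨f, hf⟩ := card_pos.1 (by exact_mod_cast hpos)
  exact ⟨f, by simpa [avoiding] using hf⟩

theorem exists_forall_notMem_of_card_le_div (hA : ∀ i, DependsOn (· ∈ A i) (S i))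
    (hp : ∀ i, (#(A i) : ℝ) ≤ Fintype.card (V → β) / (4 * (D + 1)))
    (hD : ∀ i, #{j | ¬Disjoint (S j) (S i)} ≤ D) :
    ∃ f : V → β, ∀ i, f ∉ A i := by
  set x : ℝ := 1 / (2 * (D + 1)) with hx
  have hx₁ : x < 1 := by rw [hx, div_lt_one (by positivity)]; linarith
  have hDx : 1 / 2 ≤ 1 - D * x := by
    rw [hx, mul_one_div, le_sub_comm, div_le_iff₀ (by positivity)]; linarith
  have hbern : 1 - D * x ≤ (1 - x) ^ D := by
    simpa [sub_eq_add_neg] using one_add_mul_le_pow (a := -x) (by linarith) D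
  refine exists_forall_notMem_of_card_le hA (x := x) (by positivity) hx₁
    (fun i => (hp i).trans ?_) hD
  rw [div_eq_mul_one_div _ (4 * _), mul_comm]
  gcongr
  calc 1 / (4 * (D + 1)) = x * (1 / 2) := by rw [hx]; field_simp; ring
    _ ≤ x * (1 - x) ^ D := by gcongr; linarith

end LovaszLocalLemma

section Hoeffding

variable {V : Type*} [Fintype V]

noncomputable def signedSum (δ : V → ℝ) (f : V → Bool) : ℝ := ∑ i, if f i then δ i else -δ i

lemma signedSum_neg (δ : V → ℝ) (f : V → Bool) : signedSum (-δ) f = -signedSum δ f := by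
  simp only [signedSum, ← sum_neg_distrib, Pi.neg_apply]
  exact sum_congr rfl fun i _ => by split_ifs <;> rfl

lemma sum_exp_mul_signedSum_le (δ : V → ℝ) (l : ℝ) :
    ∑ f : V → Bool, Real.exp (l * signedSum δ f) ≤
      Fintype.card (V → Bool) * Real.exp (l ^ 2 / 2 * ∑ i, δ i ^ 2) := by
  calc ∑ f : V → Bool, Real.exp (l * signedSum δ f)
      = ∏ i, ∑ b : Bool, Real.exp (l * if b then δ i else -δ i) := by
        simp only [Fintype.prod_sum, signedSum, mul_sum, Real.exp_sum]
    _ = ∏ i, 2 * Real.cosh (l * δ i) := by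
        simp only [Fintype.sum_bool, Real.cosh_eq]
        exact prod_congr rfl fun i _ => by
          simp only [if_true, Bool.false_eq_true, if_false, mul_neg]; ring
    _ ≤ ∏ i, 2 * Real.exp ((l * δ i) ^ 2 / 2) :=
        prod_le_prod (fun i _ => by positivity) fun i _ => by
          gcongr; exact Real.cosh_le_exp_half_sq _
    _ = Fintype.card (V → Bool) * Real.exp (l ^ 2 / 2 * ∑ i, δ i ^ 2) := by
        rw [prod_mul_distrib, prod_const, ← Real.exp_sum, mul_sum, card_univ, Fintype.card_fun,
          Fintype.card_bool]
        push_cast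
        congr 2
        exact sum_congr rfl fun i _ => by ring

lemma card_le_signedSum_le (δ : V → ℝ) {t K : ℝ} (ht : 0 ≤ t) (hK : 0 < K)
    (hδ : ∑ i, δ i ^ 2 ≤ K) :
    (#{f | t ≤ signedSum δ f} : ℝ) ≤ Real.exp (-(t ^ 2 / (2 * K))) * Fintype.card (V → Bool) := by
  set l := t / K with hl_def
  have hl : 0 ≤ l := by positivity
  have hmarkov : #{f | t ≤ signedSum δ f} * Real.exp (l * t) ≤
      Fintype.card (V → Bool) * Real.exp (l ^ 2 / 2 * K) :=
    calc #{f | t ≤ signedSum δ f} * Real.exp (l * t)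
        = ∑ f with t ≤ signedSum δ f, Real.exp (l * t) := by rw [sum_const, nsmul_eq_mul]
      _ ≤ ∑ f with t ≤ signedSum δ f, Real.exp (l * signedSum δ f) :=
          sum_le_sum fun f hf => by gcongr; exact (mem_filter.1 hf).2
      _ ≤ ∑ f, Real.exp (l * signedSum δ f) :=
          sum_le_sum_of_subset_of_nonneg (filter_subset _ _) fun _ _ _ => by positivity
      _ ≤ Fintype.card (V → Bool) * Real.exp (l ^ 2 / 2 * ∑ i, δ i ^ 2) :=
          sum_exp_mul_signedSum_le δ l
      _ ≤ Fintype.card (V → Bool) * Real.exp (l ^ 2 / 2 * K) := by gcongr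
  have hexp : -(t ^ 2 / (2 * K)) = l ^ 2 / 2 * K - l * t := by
    rw [hl_def]
    field_simp
    ring
  rw [hexp, Real.exp_sub, mul_comm, mul_div_assoc', le_div_iff₀ (Real.exp_pos _)]
  exact hmarkov

lemma card_le_abs_signedSum_le (δ : V → ℝ) {t K : ℝ} (ht : 0 ≤ t) (hK : 0 < K)
    (hδ : ∑ i, δ i ^ 2 ≤ K) :
    (#{f | t ≤ |signedSum δ f|} : ℝ) ≤
      2 * Real.exp (-(t ^ 2 / (2 * K))) * Fintype.card (V → Bool) := by
  have hsub : ({f | t ≤ |signedSum δ f|} : Finset (V → Bool)) ⊆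
      ({f | t ≤ signedSum δ f} : Finset _) ∪ ({f | t ≤ signedSum (-δ) f} : Finset _) := by
    intro f hf
    simpa [le_abs, signedSum_neg] using hf
  have hδ' : ∑ i, (-δ) i ^ 2 ≤ K := by simpa using hδ
  calc (#{f | t ≤ |signedSum δ f|} : ℝ)
      ≤ #{f | t ≤ signedSum δ f} + #{f | t ≤ signedSum (-δ) f} := by
        exact_mod_cast (card_le_card hsub).trans (card_union_le _ _)
    _ ≤ 2 * Real.exp (-(t ^ 2 / (2 * K))) * Fintype.card (V → Bool) := by
        linarith [card_le_signedSum_le δ ht hK hδ, card_le_signedSum_le (-δ) ht hK hδ']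

end Hoeffding

section Bisection

variable {α W : Type*} (e : α × Bool ≃ W) (G : SimpleGraph W)

def neighborPairs (v : W) : Set α := {a | ∃ b, G.Adj v (e (a, b))}

lemma card_not_disjoint_neighborPairs_le [Fintype W] {d : ℕ} (hG : G.IsRegularOfDegree d) (v : W) :
    #{u | ¬Disjoint (neighborPairs e G u) (neighborPairs e G v)} ≤ 2 * d * d := by
  set P := (G.neighborFinset v).image fun w => (e.symm w).1
  have hsub : ({u | ¬Disjoint (neighborPairs e G u) (neighborPairs e G v)} : Finset W) ⊆
      ((P ×ˢ univ).image e).biUnion fun w => G.neighborFinset w := by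
    intro u hu
    obtain ⟨a, ⟨c, hc⟩, ⟨b, hb⟩⟩ := Set.not_disjoint_iff.1 (mem_filter.1 hu).2
    refine mem_biUnion.2 ⟨e (a, c), mem_image_of_mem _ (mem_product.2 ⟨?_, mem_univ c⟩), ?_⟩
    · exact mem_image.2 ⟨e (a, b), (G.mem_neighborFinset _ _).2 hb, by simp⟩
    · exact (G.mem_neighborFinset _ _).2 hc.symm
  have hP : #P ≤ d := card_image_le.trans (hG v).le
  calc _ ≤ #(((P ×ˢ univ).image e).biUnion fun w => G.neighborFinset w) := card_le_card hsub
    _ ≤ ∑ w ∈ (P ×ˢ univ).image e, d := card_biUnion_le.trans (sum_le_sum fun w _ => (hG w).le)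
    _ ≤ 2 * d * d := by
        rw [sum_const, smul_eq_mul]
        gcongr
        calc #((P ×ˢ univ).image e) ≤ #P * 2 := card_image_le.trans (by simp)
          _ ≤ 2 * d := by linarith

lemma abs_card_filter_adj_compl_sub_half [Fintype W] [DecidableEq W] (X : Finset W) (v : W) :
    |(#(Xᶜ.filter (G.Adj v)) : ℝ) - G.degree v / 2| =
      |(#(X.filter (G.Adj v)) : ℝ) - G.degree v / 2| := by
  have hsplit : #(X.filter (G.Adj v)) + #(Xᶜ.filter (G.Adj v)) = G.degree v := by
    rw [← card_union_of_disjoint (disjoint_filter_filter disjoint_compl_right), ← filter_union,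
      union_compl, ← G.neighborFinset_eq_filter, G.card_neighborFinset_eq_degree]
  rw [← hsplit, Nat.cast_add, ← abs_neg]
  ring_nf

variable [Fintype α]

def bisection (f : α → Bool) : Finset W :=
  univ.map ⟨fun a => e (a, f a), fun _ _ h => congrArg Prod.fst (e.injective h)⟩

lemma card_bisection (f : α → Bool) : #(bisection e f) = Fintype.card α := by
  simp [bisection]

lemma card_filter_adj_bisection (v : W) (f : α → Bool) :
    #((bisection e f).filter (G.Adj v)) = #{a | G.Adj v (e (a, f a))} := by
  rw [bisection, filter_map, card_map]
  rfl

lemma dependsOn_card_filter_adj_bisection (v : W) :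
    DependsOn (fun f => #((bisection e f).filter (G.Adj v))) (neighborPairs e G v) := by
  intro f g hfg
  simp only [card_filter_adj_bisection]
  congr 1
  refine filter_congr fun a _ => ?_
  by_cases ha : a ∈ neighborPairs e G v
  · rw [hfg a ha]
  · simp only [neighborPairs, Set.mem_ofPred_eq, not_exists] at ha
    simp [ha]

variable [Fintype W]

noncomputable def adjIndicator (v : W) (a : α) (b : Bool) : ℝ :=
  if G.Adj v (e (a, b)) then 1 else 0

noncomputable def adjImbalance (v : W) (a : α) : ℝ :=
  adjIndicator e G v a true - adjIndicator e G v a false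

lemma sum_adjIndicator (v : W) :
    ∑ a, (adjIndicator e G v a true + adjIndicator e G v a false) = G.degree v := by
  rw [← G.card_neighborFinset_eq_degree, G.neighborFinset_eq_filter, card_filter, Nat.cast_sum,
    ← e.sum_comp, Fintype.sum_prod_type]
  simp only [Fintype.sum_bool, adjIndicator, Nat.cast_ite, Nat.cast_one, Nat.cast_zero]

lemma signedSum_adjImbalance (v : W) (f : α → Bool) :
    signedSum (adjImbalance e G v) f =
      2 * #((bisection e f).filter (G.Adj v)) - G.degree v := by
  rw [← sum_adjIndicator e G v, card_filter_adj_bisection, card_filter, Nat.cast_sum, mul_sum,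
    ← sum_sub_distrib]
  refine sum_congr rfl fun a _ => ?_
  unfold adjImbalance adjIndicator
  cases f a <;> simp only [Bool.false_eq_true, if_true, if_false] <;> split_ifs <;> norm_num

lemma sum_adjImbalance_sq_le (v : W) : ∑ a, adjImbalance e G v a ^ 2 ≤ G.degree v := by
  rw [← sum_adjIndicator e G v]
  refine sum_le_sum fun a _ => ?_
  simp only [adjImbalance, adjIndicator]
  split_ifs <;> norm_num

noncomputable def unbalancedAt (v : W) (d : ℕ) : Finset (α → Bool) :=
  {f | (d : ℝ) ^ ((2 : ℝ) / 3) < |(#((bisection e f).filter (G.Adj v)) : ℝ) - d / 2|}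

lemma card_unbalancedAt_le {d : ℕ} (hd : 0 < d) (hG : G.IsRegularOfDegree d) (v : W) :
    (#(unbalancedAt e G v d) : ℝ) ≤
      2 * Real.exp (-(2 * (d : ℝ) ^ ((1 : ℝ) / 3))) * Fintype.card (α → Bool) := by
  set y := (d : ℝ) ^ ((1 : ℝ) / 3)
  have hy₂ : (d : ℝ) ^ ((2 : ℝ) / 3) = y ^ 2 := by
    rw [← Real.rpow_natCast, ← Real.rpow_mul (by positivity)]; norm_num
  have hy₃ : (d : ℝ) = y ^ 3 := by
    rw [← Real.rpow_natCast, ← Real.rpow_mul (by positivity)]; norm_num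
  have hsub : unbalancedAt e G v d ⊆
      ({f | 2 * y ^ 2 ≤ |signedSum (adjImbalance e G v) f|} : Finset _) := by
    intro f hf
    simp only [unbalancedAt, mem_filter, mem_univ, true_and] at hf ⊢
    rw [hy₂] at hf
    rw [signedSum_adjImbalance, hG v]
    calc 2 * y ^ 2 ≤ 2 * |(#((bisection e f).filter (G.Adj v)) : ℝ) - d / 2| := by linarith
      _ = _ := by rw [← abs_two, ← abs_mul, abs_two]; ring_nf
  have hδ : ∑ a, adjImbalance e G v a ^ 2 ≤ d := hG v ▸ sum_adjImbalance_sq_le e G v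
  calc (#(unbalancedAt e G v d) : ℝ)
      ≤ #{f | 2 * y ^ 2 ≤ |signedSum (adjImbalance e G v) f|} := by
        exact_mod_cast card_le_card hsub
    _ ≤ 2 * Real.exp (-((2 * y ^ 2) ^ 2 / (2 * d))) * Fintype.card (α → Bool) :=
        card_le_abs_signedSum_le _ (by positivity) (by positivity) hδ
    _ = 2 * Real.exp (-(2 * y)) * Fintype.card (α → Bool) := by
        rw [hy₃]
        congr 4
        field_simp

end Bisection

lemma two_mul_exp_neg_le {d : ℕ} (hd : 2 ^ 18 ≤ d) :
    2 * Real.exp (-(2 * (d : ℝ) ^ ((1 : ℝ) / 3))) ≤ 1 / (4 * ((2 * d * d : ℕ) + 1)) := by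
  set y := (d : ℝ) ^ ((1 : ℝ) / 3)
  have hy : 0 < y := by positivity
  have hy₃ : (d : ℝ) = y ^ 3 := by
    rw [← Real.rpow_natCast, ← Real.rpow_mul (by positivity)]; norm_num
  have hy₆₄ : 64 ≤ y := by
    refine le_of_pow_le_pow_left₀ three_ne_zero hy.le ?_
    rw [← hy₃]
    exact_mod_cast (by norm_num : (64 ^ 3 : ℕ) ≤ 2 ^ 18).trans hd
  -- `exp (2y) ≥ (2y)^8 / 8!`, which exceeds `8 (2 y^6 + 1)` once `y ≥ 64`
  have hexp := Real.pow_div_factorial_le_exp (2 * y) (by positivity) 8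
  rw [Real.exp_neg, ← div_eq_mul_inv, div_le_div_iff₀ (Real.exp_pos _) (by positivity)]
  push_cast
  rw [hy₃]
  norm_num [Nat.factorial] at hexp
  nlinarith [pow_le_pow_left₀ (by norm_num) hy₆₄ 6, pow_le_pow_left₀ (by norm_num) hy₆₄ 2,
    mul_le_mul_of_nonneg_left (pow_le_pow_left₀ (by norm_num) hy₆₄ 2) (pow_nonneg hy.le 6)]

theorem exists_bisection_abs_card_filter_adj_sub_le {α W : Type*} [Fintype α] [Fintype W]
    (e : α × Bool ≃ W) (G : SimpleGraph W) {d : ℕ} (hd : 2 ^ 18 ≤ d)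
    (hG : G.IsRegularOfDegree d) :
    ∃ f : α → Bool, ∀ v,
      |(#((bisection e f).filter (G.Adj v)) : ℝ) - d / 2| ≤ (d : ℝ) ^ ((2 : ℝ) / 3) := by
  have hdep (v : W) : DependsOn (· ∈ unbalancedAt e G v d) (neighborPairs e G v) :=
    fun f g hfg => by
      have hcard := dependsOn_card_filter_adj_bisection e G v hfg
      dsimp only at hcard
      simp only [unbalancedAt, mem_filter, mem_univ, true_and, hcard]
  have hp (v : W) : (#(unbalancedAt e G v d) : ℝ) ≤
      Fintype.card (α → Bool) / (4 * ((2 * d * d : ℕ) + 1)) := by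
    calc (#(unbalancedAt e G v d) : ℝ)
        ≤ 2 * Real.exp (-(2 * (d : ℝ) ^ ((1 : ℝ) / 3))) * Fintype.card (α → Bool) :=
          card_unbalancedAt_le e G (by omega) hG v
      _ ≤ 1 / (4 * ((2 * d * d : ℕ) + 1)) * Fintype.card (α → Bool) := by
          gcongr; exact two_mul_exp_neg_le hd
      _ = _ := one_div_mul_eq_div _ _
  obtain ⟨f, hf⟩ :=
    exists_forall_notMem_of_card_le_div hdep hp (card_not_disjoint_neighborPairs_le e G hG)
  exact ⟨f, fun v => by simpa [unbalancedAt] using hf v⟩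

theorem stmt_10 :
    ∃ d₀ : ℕ, ∀ d : ℕ, d₀ ≤ d → ∀ n : ℕ, Even n → d + 1 ≤ n →
      ∀ G : SimpleGraph (Fin n), G.IsRegularOfDegree d →
        ∃ X : Finset (Fin n), 2 * X.card = n ∧
          ∀ v : Fin n,
            |((X.filter (G.Adj v)).card : ℝ) - (d : ℝ) / 2| ≤ (d : ℝ) ^ ((2 : ℝ) / 3) ∧
            |((Xᶜ.filter (G.Adj v)).card : ℝ) - (d : ℝ) / 2| ≤ (d : ℝ) ^ ((2 : ℝ) / 3) := by
  refine ⟨2 ^ 18, fun d hd n ⟨m, hm⟩ _ G hG => ?_⟩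
  subst hm
  have e : Fin m × Bool ≃ Fin (m + m) := Fintype.equivOfCardEq (by simp [mul_two])
  obtain ⟨f, hf⟩ := exists_bisection_abs_card_filter_adj_sub_le e G hd hG
  refine ⟨bisection e f, by rw [card_bisection, Fintype.card_fin, two_mul], fun v => ⟨hf v, ?_⟩⟩
  have hcompl := abs_card_filter_adj_compl_sub_half G (bisection e f) v
  rw [hG v] at hcompl
  exact hcompl ▸ hf v
end

section
/- Let (A_i)_{i=1}^n be events in a probability space with dependency digraph D, and suppose there exist reals α_i ∈ [0,1) such that P(A_i) ≤ α_i · Π_{(A_i,A_j)∈E(D)} (1 - α_j) for all i. Then P(∩_{i=1}^n Ā_i) ≥ Π_{i=1}^n (1 - α_i) > 0. -/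
/-!
Let `avoid A S` be the event that no `A j` with `j ∈ S` occurs. The heart of the argument is
`μ (A i ∩ avoid A S) ≤ α i * μ (avoid A S)` for `i ∉ S`, by strong induction on `S`. Split `S`
into the neighbours `S₁` of `i` and the rest `S₂`. Independence gives
`μ (A i ∩ avoid A S) ≤ μ (A i) * μ (avoid A S₂)`, while adding the neighbours one at a time,
each time applying the induction hypothesis to a smaller set, gives
`(∏ j ∈ S₁, (1 - α j)) * μ (avoid A S₂) ≤ μ (avoid A S)`; the bound on `μ (A i)` links the two.
Adding all events one at a time in the same way gives `∏ i, (1 - α i) ≤ μ (avoid A univ)`.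
-/

open MeasureTheory
open scoped ENNReal

namespace LovaszLocalLemma

variable {Ω ι : Type*} {A : ι → Set Ω}

def avoid (A : ι → Set Ω) (S : Finset ι) : Set Ω := ⋂ j ∈ S, (A j)ᶜ

@[simp]
lemma avoid_empty : avoid A ∅ = Set.univ := by simp [avoid]

lemma avoid_insert [DecidableEq ι] (j : ι) (S : Finset ι) :
    avoid A (insert j S) = avoid A S \ A j := by
  simp only [avoid, Finset.set_biInter_insert, Set.sdiff_eq, Set.inter_comm]

lemma avoid_anti {S T : Finset ι} (h : S ⊆ T) : avoid A T ⊆ avoid A S :=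
  Set.biInter_mono h fun _ _ => le_rfl

variable [MeasurableSpace Ω] {μ : Measure Ω} {α : ι → ℝ≥0∞}

lemma one_sub_mul_measure_avoid_le_insert [IsFiniteMeasure μ] [DecidableEq ι] {j : ι}
    (hAj : MeasurableSet (A j)) {T : Finset ι}
    (hj : μ (A j ∩ avoid A T) ≤ α j * μ (avoid A T)) :
    (1 - α j) * μ (avoid A T) ≤ μ (avoid A (insert j T)) := by
  have hsplit : μ (avoid A T) = μ (A j ∩ avoid A T) + μ (avoid A (insert j T)) := by
    rw [avoid_insert, Set.inter_comm, measure_inter_add_sdiff _ hAj]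
  rw [ENNReal.sub_mul fun _ _ => measure_ne_top μ _, one_mul, tsub_le_iff_right, add_comm]
  calc μ (avoid A T) = μ (A j ∩ avoid A T) + μ (avoid A (insert j T)) := hsplit
    _ ≤ α j * μ (avoid A T) + μ (avoid A (insert j T)) := by gcongr

lemma prod_one_sub_mul_measure_avoid_le [IsFiniteMeasure μ] [DecidableEq ι]
    (hA : ∀ i, MeasurableSet (A i)) (R T : Finset ι) (hRT : Disjoint R T)
    (hbound : ∀ j ∈ T, ∀ U ⊆ R ∪ T, j ∉ U → μ (A j ∩ avoid A U) ≤ α j * μ (avoid A U)) :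
    (∏ j ∈ T, (1 - α j)) * μ (avoid A R) ≤ μ (avoid A (R ∪ T)) := by
  induction T using Finset.induction_on with
  | empty => simp
  | @insert j T hjT ih =>
    have hRT' : Disjoint R T := hRT.mono_right (Finset.subset_insert j T)
    have hjRT : j ∉ R ∪ T := by
      simpa [hjT] using Finset.disjoint_right.mp hRT (Finset.mem_insert_self j T)
    have hRT_sub : R ∪ T ⊆ R ∪ insert j T := Finset.union_subset_union_right (by simp)
    calc (∏ k ∈ insert j T, (1 - α k)) * μ (avoid A R)
        = (1 - α j) * ((∏ k ∈ T, (1 - α k)) * μ (avoid A R)) := by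
          rw [Finset.prod_insert hjT, mul_assoc]
      _ ≤ (1 - α j) * μ (avoid A (R ∪ T)) := by
          gcongr
          exact ih hRT' fun k hk U hU => hbound k (by simp [hk]) U (hU.trans hRT_sub)
      _ ≤ μ (avoid A (insert j (R ∪ T))) :=
          one_sub_mul_measure_avoid_le_insert (hA j) <|
            hbound j (by simp) _ hRT_sub hjRT
      _ = μ (avoid A (R ∪ insert j T)) := by rw [Finset.union_insert]

variable [IsFiniteMeasure μ] [DecidableEq ι] {N : ι → Finset ι}

lemma measure_inter_avoid_le (hA : ∀ i, MeasurableSet (A i))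
    (hindep : ∀ i S, i ∉ S → Disjoint S (N i) →
      μ (A i ∩ avoid A S) = μ (A i) * μ (avoid A S))
    (hP : ∀ i, μ (A i) ≤ α i * ∏ j ∈ N i, (1 - α j))
    (S : Finset ι) (i : ι) (hi : i ∉ S) :
    μ (A i ∩ avoid A S) ≤ α i * μ (avoid A S) := by
  induction S using Finset.strongInduction generalizing i with
  | H S ih =>
    set S₁ := S.filter (· ∈ N i)
    set S₂ := S.filter (· ∉ N i)
    have hS : S₂ ∪ S₁ = S := by rw [Finset.union_comm, Finset.filter_union_filter_not_eq]
    have hind : μ (A i ∩ avoid A S₂) = μ (A i) * μ (avoid A S₂) :=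
      hindep i S₂ (fun h => hi (Finset.mem_of_mem_filter i h))
        (Finset.disjoint_left.mpr fun _ hj => (Finset.mem_filter.mp hj).2)
    have hneighbours : (∏ j ∈ S₁, (1 - α j)) * μ (avoid A S₂) ≤ μ (avoid A S) := by
      rw [← hS]
      refine prod_one_sub_mul_measure_avoid_le hA S₂ S₁
        (Finset.disjoint_filter_filter_not S S _).symm fun j hj U hU hjU => ?_
      rw [hS] at hU
      have hUS : U ⊂ S := Finset.ssubset_iff_subset_ne.mpr
        ⟨hU, fun h => hjU (h ▸ Finset.mem_of_mem_filter j hj)⟩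
      exact ih U hUS j hjU
    have hprod : ∏ j ∈ N i, (1 - α j) ≤ ∏ j ∈ S₁, (1 - α j) :=
      Finset.prod_le_prod_of_subset_of_le_one' (fun j hj => (Finset.mem_filter.mp hj).2)
        fun _ _ _ => tsub_le_self
    calc μ (A i ∩ avoid A S) ≤ μ (A i ∩ avoid A S₂) :=
          measure_mono (Set.inter_subset_inter_right _ (avoid_anti (Finset.filter_subset _ S)))
      _ = μ (A i) * μ (avoid A S₂) := hind
      _ ≤ α i * ((∏ j ∈ S₁, (1 - α j)) * μ (avoid A S₂)) := by
          rw [← mul_assoc]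
          gcongr
          exact (hP i).trans (by gcongr)
      _ ≤ α i * μ (avoid A S) := by gcongr

lemma prod_one_sub_le_measure_avoid [IsProbabilityMeasure μ] (hA : ∀ i, MeasurableSet (A i))
    (hindep : ∀ i S, i ∉ S → Disjoint S (N i) →
      μ (A i ∩ avoid A S) = μ (A i) * μ (avoid A S))
    (hP : ∀ i, μ (A i) ≤ α i * ∏ j ∈ N i, (1 - α j)) (T : Finset ι) :
    ∏ j ∈ T, (1 - α j) ≤ μ (avoid A T) := by
  simpa using prod_one_sub_mul_measure_avoid_le hA ∅ T (Finset.disjoint_empty_left T)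
    fun j _ U _ hjU => measure_inter_avoid_le hA hindep hP U j hjU

end LovaszLocalLemma

open LovaszLocalLemma

theorem stmt_17 {Ω : Type*} [MeasurableSpace Ω] (μ : Measure Ω) [IsProbabilityMeasure μ]
    (n : ℕ) (A : Fin n → Set Ω) (hA : ∀ i, MeasurableSet (A i))
    (E : Fin n → Fin n → Prop) [DecidableRel E]
    (hdep : ∀ i : Fin n, ∀ S : Finset (Fin n),
      (∀ j ∈ S, j ≠ i ∧ ¬E i j) → ∀ c : Fin n → Bool,
      μ (A i ∩ ⋂ j ∈ S, (if c j then A j else (A j)ᶜ)) =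
        μ (A i) * μ (⋂ j ∈ S, (if c j then A j else (A j)ᶜ)))
    (α : Fin n → ℝ≥0∞) (hα : ∀ i, α i < 1)
    (hP : ∀ i, μ (A i) ≤ α i * ∏ j ∈ Finset.univ.filter (fun j => E i j), (1 - α j)) :
    (∏ i, (1 - α i)) ≤ μ (⋂ i, (A i)ᶜ) ∧ 0 < ∏ i, (1 - α i) := by
  have hindep : ∀ i S, i ∉ S → Disjoint S (Finset.univ.filter (E i)) →
      μ (A i ∩ avoid A S) = μ (A i) * μ (avoid A S) := fun i S hi hS => by
    simpa [avoid] using hdep i S (fun j hj => ⟨fun h => hi (h ▸ hj),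
      by simpa using Finset.disjoint_left.mp hS hj⟩) fun _ => false
  refine ⟨?_, CanonicallyOrderedAdd.prod_pos.mpr fun i _ => tsub_pos_of_lt (hα i)⟩
  simpa [avoid] using prod_one_sub_le_measure_avoid hA hindep hP Finset.univ
end

section
/- Let G be a finite simple graph with maximum degree Δ. Then the edges of G can be properly colored with Δ + 1 colors; equivalently, E(G) can be partitioned into Δ + 1 matchings. -/
/-!
Remove an edge `xy`, colour the rest by induction and fix a colour `α` missing at `x`. A fan is a
sequence `y = f 0, …, f k` of distinct neighbours of `x` such that the colour of `x f (l+1)` is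
missing at `f l`; rotating it up to `f i` (giving each `x f l`, `l < i`, the colour of
`x f (l+1)`) keeps the colouring proper and leaves `x f i` uncoloured. Take a colour `β` missing at
`f k`. If `β` is missing at `x`, rotate the whole fan and colour `x f k` with `β`; if `β` is on an
edge `x u` with `u` outside the fan, the fan grows; otherwise `β` is the colour of some
`x f (i+1)`, hence missing at `f i` too. After rotating up to `f i`, the `α/β` Kempe graph has
maximum degree two and `x`, `f i`, `f k` have degree at most one, so `x` cannot reach both `f i`
and `f k`. Swapping `α` and `β` on the component of `x` frees `β` at `x` and at the unreached
vertex. If that is `f k`, rotate the whole fan first: this only trades the Kempe edge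
`x f (i+1)` for `x f i`, whose ends are already connected.
-/

open Function Finset

namespace SimpleGraph

variable {V κ : Type*}

section Paths

variable {G G' : SimpleGraph V} {u v w x : V}

theorem Walk.IsPath.exists_adj_adj_of_mem_support {p : G.Walk u v} (hp : p.IsPath)
    (hw : w ∈ p.support) (hwu : w ≠ u) (hwv : w ≠ v) :
    ∃ a ∈ p.support, ∃ b ∈ p.support, a ≠ b ∧ G.Adj w a ∧ G.Adj w b := by
  obtain ⟨n, rfl, hn⟩ := Walk.mem_support_iff_exists_getVert.mp hw
  have h0 : n ≠ 0 := by rintro rfl; simp at hwu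
  have hl : n ≠ p.length := by rintro rfl; simp at hwv
  refine ⟨_, p.getVert_mem_support (n - 1), _, p.getVert_mem_support (n + 1), fun h => ?_,
    ?_, p.adj_getVert_succ (by omega)⟩
  · have := hp.getVert_injOn (by simp; omega) (by simp; omega) h
    omega
  · simpa [Nat.sub_add_cancel (Nat.pos_of_ne_zero h0)] using
      (p.adj_getVert_succ (i := n - 1) (by omega)).symm

theorem mem_of_reachable_of_forall_adj {S : Set V} (hS : ∀ a ∈ S, ∀ b, G.Adj a b → b ∈ S)
    (hu : u ∈ S) (h : G.Reachable u v) : v ∈ S := by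
  obtain ⟨q⟩ := h
  induction q with
  | nil => exact hu
  | cons h _ ih => exact ih (hS _ hu _ h)

theorem Reachable.of_forall_adj (hr : G'.Reachable u v)
    (h : ∀ ⦃a b⦄, G'.Adj a b → G.Reachable a b) : G.Reachable u v :=
  mem_of_reachable_of_forall_adj (S := {b | G.Reachable u b}) (fun _ ha _ hab => ha.trans (h hab))
    (Reachable.refl u) hr

theorem not_reachable_of_subsingleton_neighborSet
    (hK : ∀ ⦃v a b d⦄, G.Adj v a → G.Adj v b → G.Adj v d → a ≠ b → d = a ∨ d = b)
    (hx : (G.neighborSet x).Subsingleton) (hu : (G.neighborSet u).Subsingleton)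
    (hv : (G.neighborSet v).Subsingleton) (hxu : x ≠ u) (hxv : x ≠ v) (huv : u ≠ v)
    (hr : G.Reachable x u) : ¬G.Reachable x v := by
  intro hr'
  obtain ⟨p, hp⟩ := (hr.symm.trans hr').exists_isPath
  have hnil : ¬p.Nil := Walk.not_nil_of_ne huv
  have closed : ∀ a ∈ p.support, ∀ b, G.Adj a b → b ∈ p.support := by
    intro a ha b hab
    by_cases hau : a = u
    · subst hau
      rw [hu hab (p.adj_snd hnil)]
      exact p.getVert_mem_support 1
    by_cases hav : a = v
    · subst hav
      rw [hv hab (p.adj_penultimate hnil).symm]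
      exact p.getVert_mem_support _
    obtain ⟨a₁, ha₁, a₂, ha₂, hne, h₁, h₂⟩ := hp.exists_adj_adj_of_mem_support ha hau hav
    rcases hK h₁ h₂ hab hne with rfl | rfl
    exacts [ha₁, ha₂]
  have hxp := mem_of_reachable_of_forall_adj closed p.start_mem_support hr.symm
  obtain ⟨a, -, b, -, hne, ha, hb⟩ := hp.exists_adj_adj_of_mem_support hxp hxu hxv
  exact hne (hx ha hb)

end Paths

variable {G G' : SimpleGraph V} {c : Sym2 V → κ} {u v w x z : V} {α β γ : κ}

/-- Colourings are total functions on `Sym2 V`; only their values on edges of `G` matter. -/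
def IsProperEdgeColoring (G : SimpleGraph V) (c : Sym2 V → κ) : Prop :=
  ∀ ⦃v a b⦄, G.Adj v a → G.Adj v b → c s(v, a) = c s(v, b) → a = b

def IsMissingColor (G : SimpleGraph V) (c : Sym2 V → κ) (v : V) (γ : κ) : Prop :=
  ∀ ⦃u⦄, G.Adj v u → c s(v, u) ≠ γ

theorem IsProperEdgeColoring.mono (h : G' ≤ G) (hc : G.IsProperEdgeColoring c) :
    G'.IsProperEdgeColoring c :=
  fun _ _ _ ha hb => hc (h ha) (h hb)

theorem IsMissingColor.mono (h : G' ≤ G) (hc : G.IsMissingColor c v γ) :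
    G'.IsMissingColor c v γ :=
  fun _ hu => hc (h hu)

theorem exists_isMissingColor [Fintype κ] {H : SimpleGraph V} [Fintype (H.neighborSet v)]
    (hGH : G ≤ H) (hv : H.degree v < Fintype.card κ) (c : Sym2 V → κ) :
    ∃ γ, G.IsMissingColor c v γ := by
  classical
  obtain ⟨γ, -, hγ⟩ := exists_mem_notMem_of_card_lt_card (t := univ)
    (s := (H.neighborFinset v).image fun u => c s(v, u)) (card_image_le.trans_lt hv)
  exact ⟨γ, fun u hu h => hγ (mem_image.mpr ⟨u, (H.mem_neighborFinset v u).mpr (hGH hu), h⟩)⟩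

theorem deleteEdges_singleton_adj_left : (G.deleteEdges {s(x, w)}).Adj x u ↔ G.Adj x u ∧ u ≠ w := by
  rw [deleteEdges_adj, Set.mem_singleton_iff, Sym2.congr_right]

theorem IsProperEdgeColoring.update_of_isMissingColor [DecidableEq V]
    (hc : (G.deleteEdges {s(x, z)}).IsProperEdgeColoring c)
    (hx : (G.deleteEdges {s(x, z)}).IsMissingColor c x γ)
    (hz : (G.deleteEdges {s(x, z)}).IsMissingColor c z γ) :
    G.IsProperEdgeColoring (update c s(x, z) γ) := by
  have hedge : ∀ ⦃v a⦄, G.Adj v a →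
      (s(v, a) = s(x, z) ∧ (G.deleteEdges {s(x, z)}).IsMissingColor c v γ) ∨
      ((G.deleteEdges {s(x, z)}).Adj v a ∧ update c s(x, z) γ s(v, a) = c s(v, a)) := by
    intro v a ha
    by_cases he : s(v, a) = s(x, z)
    · refine .inl ⟨he, ?_⟩
      rcases Sym2.eq_iff.mp he with ⟨rfl, -⟩ | ⟨rfl, -⟩
      exacts [hx, hz]
    · exact .inr ⟨by simpa [he] using ha, update_of_ne he _ _⟩
  intro v a b ha hb hab
  rcases hedge ha with ⟨ea, hv⟩ | ⟨ha', ea⟩ <;> rcases hedge hb with ⟨eb, hv⟩ | ⟨hb', eb⟩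
  · exact Sym2.congr_right.mp (ea.trans eb.symm)
  · rw [ea, update_self, eb] at hab
    exact absurd hab.symm (hv hb')
  · rw [eb, update_self, ea] at hab
    exact absurd hab (hv ha')
  · rw [ea, eb] at hab
    exact hc ha' hb' hab

theorem IsProperEdgeColoring.shift [DecidableEq V]
    (hc : (G.deleteEdges {s(x, z)}).IsProperEdgeColoring c) (hw : G.Adj x w) (hwz : w ≠ z)
    (hz : (G.deleteEdges {s(x, z)}).IsMissingColor c z (c s(x, w))) :
    (G.deleteEdges {s(x, w)}).IsProperEdgeColoring (update c s(x, z) (c s(x, w))) := by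
  have hle : (G.deleteEdges {s(x, w)}).deleteEdges {s(x, z)} ≤ G.deleteEdges {s(x, z)} :=
    fun a b h => by simp_all
  refine (hc.mono hle).update_of_isMissingColor (fun u hu h => ?_) (hz.mono hle)
  have hw' : (G.deleteEdges {s(x, z)}).Adj x w := by simpa [hwz, hw.ne'] using hw
  have huw : u ≠ w := by rintro rfl; simp at hu
  exact huw (hc (hle hu) hw' h)

section Kempe

def kempeGraph (G : SimpleGraph V) (c : Sym2 V → κ) (α β : κ) : SimpleGraph V where
  Adj u v := G.Adj u v ∧ (c s(u, v) = α ∨ c s(u, v) = β)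
  symm := ⟨fun u v h => ⟨h.1.symm, Sym2.eq_swap (a := u) ▸ h.2⟩⟩

theorem kempeGraph_adj :
    (G.kempeGraph c α β).Adj u v ↔ G.Adj u v ∧ (c s(u, v) = α ∨ c s(u, v) = β) :=
  Iff.rfl

theorem IsProperEdgeColoring.kempeGraph_adj_eq_or_eq (hc : G.IsProperEdgeColoring c) {a b d : V}
    (ha : (G.kempeGraph c α β).Adj v a) (hb : (G.kempeGraph c α β).Adj v b)
    (hd : (G.kempeGraph c α β).Adj v d) (hab : a ≠ b) : d = a ∨ d = b := by
  rw [kempeGraph_adj] at ha hb hd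
  have hcab : c s(v, a) ≠ c s(v, b) := fun h => hab (hc ha.1 hb.1 h)
  refine (?_ : c s(v, d) = c s(v, a) ∨ c s(v, d) = c s(v, b)).imp (hc hd.1 ha.1) (hc hd.1 hb.1)
  rcases ha.2 with h1 | h1 <;> rcases hb.2 with h2 | h2 <;> rcases hd.2 with h3 | h3 <;>
    simp_all

theorem IsProperEdgeColoring.kempeGraph_neighborSet_subsingleton (hc : G.IsProperEdgeColoring c)
    (hv : G.IsMissingColor c v α ∨ G.IsMissingColor c v β) :
    ((G.kempeGraph c α β).neighborSet v).Subsingleton := by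
  intro a ha b hb
  rw [mem_neighborSet, kempeGraph_adj] at ha hb
  rcases hv with h | h
  · exact hc ha.1 hb.1 ((ha.2.resolve_left (h ha.1)).trans (hb.2.resolve_left (h hb.1)).symm)
  · exact hc ha.1 hb.1 ((ha.2.resolve_right (h ha.1)).trans (hb.2.resolve_right (h hb.1)).symm)

variable [DecidableEq κ]

open Classical in
noncomputable def kempeSwap (G : SimpleGraph V) (c : Sym2 V → κ) (α β : κ) (x : V) :
    Sym2 V → κ := fun e =>
  if ∃ v ∈ e, (G.kempeGraph c α β).Reachable x v then Equiv.swap α β (c e) else c e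

theorem kempeSwap_of_reachable (h : (G.kempeGraph c α β).Reachable x v) (a : V) :
    G.kempeSwap c α β x s(v, a) = Equiv.swap α β (c s(v, a)) :=
  if_pos ⟨v, Sym2.mem_mk_left _ _, h⟩

theorem kempeSwap_of_not_reachable (hv : ¬(G.kempeGraph c α β).Reachable x v) {a : V}
    (ha : G.Adj v a) : G.kempeSwap c α β x s(v, a) = c s(v, a) := by
  unfold kempeSwap
  split_ifs with h
  · obtain ⟨u, hu, hr⟩ := h
    rcases Sym2.mem_iff.mp hu with rfl | rfl
    · exact absurd hr hv
    by_cases hcol : c s(v, u) = α ∨ c s(v, u) = β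
    · have hadj : (G.kempeGraph c α β).Adj u v :=
        kempeGraph_adj.mpr ⟨ha.symm, Sym2.eq_swap (a := v) ▸ hcol⟩
      exact absurd (hr.trans hadj.reachable) hv
    · push Not at hcol
      exact Equiv.swap_apply_of_ne_of_ne hcol.1 hcol.2
  · rfl

theorem IsProperEdgeColoring.kempeSwap (hc : G.IsProperEdgeColoring c) (α β : κ) (x : V) :
    G.IsProperEdgeColoring (G.kempeSwap c α β x) := by
  intro v a b ha hb hab
  by_cases hv : (G.kempeGraph c α β).Reachable x v
  · rw [kempeSwap_of_reachable hv, kempeSwap_of_reachable hv] at hab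
    exact hc ha hb ((Equiv.swap α β).injective hab)
  · rw [kempeSwap_of_not_reachable hv ha, kempeSwap_of_not_reachable hv hb] at hab
    exact hc ha hb hab

theorem IsMissingColor.kempeSwap_self (h : G.IsMissingColor c x α) :
    G.IsMissingColor (G.kempeSwap c α β x) x β := by
  intro u hu hβ
  rw [kempeSwap_of_reachable (Reachable.refl x), Equiv.swap_apply_eq_iff,
    Equiv.swap_apply_right] at hβ
  exact h hu hβ

theorem IsMissingColor.kempeSwap_of_not_reachable (h : G.IsMissingColor c z γ)
    (hz : ¬(G.kempeGraph c α β).Reachable x z) :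
    G.IsMissingColor (G.kempeSwap c α β x) z γ := by
  intro u hu
  rw [SimpleGraph.kempeSwap_of_not_reachable hz hu]
  exact h hu

theorem exists_isProperEdgeColoring_of_not_reachable [DecidableEq V]
    (hc : (G.deleteEdges {s(x, z)}).IsProperEdgeColoring c)
    (hx : (G.deleteEdges {s(x, z)}).IsMissingColor c x α)
    (hz : (G.deleteEdges {s(x, z)}).IsMissingColor c z β)
    (hxz : ¬((G.deleteEdges {s(x, z)}).kempeGraph c α β).Reachable x z) :
    ∃ c' : Sym2 V → κ, G.IsProperEdgeColoring c' :=
  ⟨_, (hc.kempeSwap α β x).update_of_isMissingColor hx.kempeSwap_self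
    (hz.kempeSwap_of_not_reachable hxz)⟩

end Kempe

section Fan

variable {f : ℕ → V} {i j k : ℕ}

/-- Only `f 0, …, f k` matter. `s(x, f 0)` is the uncoloured edge, so missing colours are taken in
`G.deleteEdges {s(x, f 0)}`. -/
structure IsFan (G : SimpleGraph V) (c : Sym2 V → κ) (x : V) (f : ℕ → V) (k : ℕ) : Prop where
  injOn : Set.InjOn f (Set.Iic k)
  adj : ∀ i ≤ k, G.Adj x (f i)
  isMissingColor : ∀ i < k,
    (G.deleteEdges {s(x, f 0)}).IsMissingColor c (f i) (c s(x, f (i + 1)))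

theorem IsFan.eq_of_apply_eq (hF : G.IsFan c x f k) (hi : i ≤ k) (hj : j ≤ k) (h : f i = f j) :
    i = j :=
  hF.injOn hi hj h

theorem IsFan.single (hxy : G.Adj x v) : G.IsFan c x (fun _ => v) 0 where
  injOn i hi j hj _ := by rw [Set.mem_Iic, Nat.le_zero] at hi hj; rw [hi, hj]
  adj _ _ := hxy
  isMissingColor _ h := absurd h (Nat.not_lt_zero _)

theorem IsFan.extend (hF : G.IsFan c x f k) (hu : (G.deleteEdges {s(x, f 0)}).Adj x u)
    (hnew : ∀ j ≤ k, f j ≠ u)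
    (hmiss : (G.deleteEdges {s(x, f 0)}).IsMissingColor c (f k) (c s(x, u))) :
    G.IsFan c x (update f (k + 1) u) (k + 1) := by
  have hle : ∀ j ≤ k, update f (k + 1) u j = f j := fun j hj => update_of_ne (by omega) _ _
  refine ⟨fun j hj l hl h => ?_, fun j hj => ?_, fun j hj => ?_⟩
  · simp only [Set.mem_Iic] at hj hl
    rcases hj.lt_or_eq with hj | rfl <;> rcases hl.lt_or_eq with hl | rfl
    · rw [hle j (by omega), hle l (by omega)] at h
      exact hF.eq_of_apply_eq (by omega) (by omega) h
    · rw [hle j (by omega), update_self] at h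
      exact absurd h (hnew j (by omega))
    · rw [hle l (by omega), update_self] at h
      exact absurd h.symm (hnew l (by omega))
    · rfl
  · rcases hj.lt_or_eq with hj | rfl
    · rw [hle j (by omega)]
      exact hF.adj j (by omega)
    · rw [update_self]
      exact (deleteEdges_singleton_adj_left.mp hu).1
  · rw [hle 0 (Nat.zero_le k)]
    rcases (Nat.lt_succ_iff_lt_or_eq.mp hj) with hj | rfl
    · rw [hle j hj.le, hle (j + 1) hj]
      exact hF.isMissingColor j hj
    · rw [hle j le_rfl, update_self]
      exact hmiss

theorem IsFan.lt_card [Fintype V] (hF : G.IsFan c x f k) : k < Fintype.card V := by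
  have := card_le_card_of_injOn f (s := Iic k) (t := univ) (fun _ _ => mem_univ _)
    (by simpa using hF.injOn)
  simpa using this

variable [DecidableEq V]

def rotateFan (c : Sym2 V → κ) (x : V) (f : ℕ → V) : ℕ → Sym2 V → κ
  | 0 => c
  | i + 1 => update (rotateFan c x f i) s(x, f i) (c s(x, f (i + 1)))

theorem rotateFan_apply_of_forall_ne {e : Sym2 V} (h : ∀ l < i, e ≠ s(x, f l)) :
    rotateFan c x f i e = c e := by
  induction i with
  | zero => rfl
  | succ i ih =>
    rw [rotateFan, update_of_ne (h i i.lt_succ_self), ih fun l hl => h l (hl.trans i.lt_succ_self)]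

theorem rotateFan_apply_of_lt {l : ℕ} (hf : Set.InjOn f (Set.Iic i)) (hl : l < i) :
    rotateFan c x f i s(x, f l) = c s(x, f (l + 1)) := by
  induction i with
  | zero => omega
  | succ i ih =>
    rw [rotateFan]
    rcases (Nat.lt_succ_iff_lt_or_eq.mp hl) with hl | rfl
    · have hne : f l ≠ f i := fun h => hl.ne (hf (by simp; omega) (by simp) h)
      rw [update_of_ne (mt Sym2.congr_right.mp hne),
        ih (hf.mono (Set.Iic_subset_Iic.mpr i.le_succ)) hl]
    · exact update_self ..

theorem IsMissingColor.rotateFan (hvx : v ≠ x) (hvf : ∀ l < i, v ≠ f l)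
    (h : (G.deleteEdges {s(x, f 0)}).IsMissingColor c v γ) :
    (G.deleteEdges {s(x, f i)}).IsMissingColor (rotateFan c x f i) v γ := by
  intro u hu
  have hne : ∀ l < i, s(v, u) ≠ s(x, f l) := fun l hl he => by
    rcases Sym2.eq_iff.mp he with ⟨h1, -⟩ | ⟨h1, -⟩
    exacts [hvx h1, hvf l hl h1]
  rw [rotateFan_apply_of_forall_ne hne]
  refine h ?_
  rcases Nat.eq_zero_or_pos i with rfl | hi
  · exact hu
  · simpa [hne 0 hi] using (deleteEdges_le _ hu : G.Adj v u)

theorem IsFan.isMissingColor_rotateFan_center (hF : G.IsFan c x f k) (hi : i ≤ k)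
    (h : (G.deleteEdges {s(x, f 0)}).IsMissingColor c x α) :
    (G.deleteEdges {s(x, f i)}).IsMissingColor (rotateFan c x f i) x α := by
  intro u hu
  by_cases hfan : ∃ l < i, u = f l
  · obtain ⟨l, hl, rfl⟩ := hfan
    rw [rotateFan_apply_of_lt (hF.injOn.mono (Set.Iic_subset_Iic.mpr hi)) hl]
    have hne : f (l + 1) ≠ f 0 := fun he => by
      have := hF.eq_of_apply_eq (by omega) (Nat.zero_le k) he
      omega
    exact h (deleteEdges_singleton_adj_left.mpr ⟨hF.adj (l + 1) (by omega), hne⟩)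
  · push Not at hfan
    rw [rotateFan_apply_of_forall_ne fun l hl he => hfan l hl (Sym2.congr_right.mp he)]
    refine h ?_
    rcases Nat.eq_zero_or_pos i with rfl | hi
    · exact hu
    · exact deleteEdges_singleton_adj_left.mpr ⟨(deleteEdges_singleton_adj_left.mp hu).1, hfan 0 hi⟩

theorem IsFan.isProperEdgeColoring_rotateFan (hF : G.IsFan c x f k)
    (hc : (G.deleteEdges {s(x, f 0)}).IsProperEdgeColoring c) (hi : i ≤ k) :
    (G.deleteEdges {s(x, f i)}).IsProperEdgeColoring (rotateFan c x f i) := by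
  induction i with
  | zero => exact hc
  | succ i ih =>
    have hnext : c s(x, f (i + 1)) = rotateFan c x f i s(x, f (i + 1)) :=
      (rotateFan_apply_of_forall_ne fun l hl he => by
        have := hF.eq_of_apply_eq hi (by omega) (Sym2.congr_right.mp he)
        omega).symm
    rw [rotateFan, hnext]
    refine (ih (by omega)).shift (hF.adj _ hi) (fun he => ?_) ?_
    · have := hF.eq_of_apply_eq hi (by omega) he
      omega
    rw [← hnext]
    refine (hF.isMissingColor i (by omega)).rotateFan (hF.adj i (by omega)).ne' fun l hl he => ?_
    have := hF.eq_of_apply_eq (by omega) (by omega) he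
    omega

theorem IsFan.reachable_of_adj_kempeGraph_rotateFan {a b : V} (hF : G.IsFan c x f k)
    (hc : (G.deleteEdges {s(x, f 0)}).IsProperEdgeColoring c)
    (hα : (G.deleteEdges {s(x, f 0)}).IsMissingColor c x α)
    (hi : i < k) (hβi : c s(x, f (i + 1)) = β)
    (hr : ((G.deleteEdges {s(x, f i)}).kempeGraph (rotateFan c x f i) α β).Reachable x (f i))
    (hab : ((G.deleteEdges {s(x, f k)}).kempeGraph (rotateFan c x f k) α β).Adj a b) :
    ((G.deleteEdges {s(x, f i)}).kempeGraph (rotateFan c x f i) α β).Reachable a b := by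
  have hadj : ∀ l < k, (G.deleteEdges {s(x, f 0)}).Adj x (f (l + 1)) := fun l hl =>
    deleteEdges_singleton_adj_left.mpr ⟨hF.adj _ hl, fun h => by
      have := hF.eq_of_apply_eq hl (Nat.zero_le k) h
      omega⟩
  obtain ⟨hab, hcol⟩ := kempeGraph_adj.mp hab
  by_cases hfan : ∃ l < k, s(a, b) = s(x, f l)
  · obtain ⟨l, hl, he⟩ := hfan
    rw [he, rotateFan_apply_of_lt hF.injOn hl] at hcol
    have hl' : l = i := by
      have := hc (hadj l hl) (hadj i hi) ((hcol.resolve_left (hα (hadj l hl))).trans hβi.symm)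
      have := hF.eq_of_apply_eq hl hi this
      omega
    subst hl'
    rcases Sym2.eq_iff.mp he with ⟨rfl, rfl⟩ | ⟨rfl, rfl⟩
    exacts [hr, hr.symm]
  · push Not at hfan
    rw [rotateFan_apply_of_forall_ne hfan] at hcol
    refine Adj.reachable (kempeGraph_adj.mpr ⟨?_, ?_⟩)
    · simpa [hfan i hi] using (deleteEdges_le _ hab : G.Adj a b)
    · rwa [rotateFan_apply_of_forall_ne fun l hl => hfan l (hl.trans hi)]

theorem IsFan.exists_isProperEdgeColoring_of_last_missing_on_fan [DecidableEq κ]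
    (hF : G.IsFan c x f k)
    (hc : (G.deleteEdges {s(x, f 0)}).IsProperEdgeColoring c)
    (hα : (G.deleteEdges {s(x, f 0)}).IsMissingColor c x α)
    (hβ : (G.deleteEdges {s(x, f 0)}).IsMissingColor c (f k) β)
    (hi : i < k) (hβi : c s(x, f (i + 1)) = β) :
    ∃ c' : Sym2 V → κ, G.IsProperEdgeColoring c' := by
  have hxw : x ≠ f i := (hF.adj i hi.le).ne
  have hxt : x ≠ f k := (hF.adj k le_rfl).ne
  have hwt : f i ≠ f k := fun h => hi.ne (hF.eq_of_apply_eq hi.le le_rfl h)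
  have htf : ∀ j ≤ k, ∀ l < j, f k ≠ f l := fun j hj l hl h => by
    have := hF.eq_of_apply_eq le_rfl (by omega) h
    omega
  have hcA := hF.isProperEdgeColoring_rotateFan hc hi.le
  have hαA := hF.isMissingColor_rotateFan_center hi.le hα
  have hβw : (G.deleteEdges {s(x, f i)}).IsMissingColor (rotateFan c x f i) (f i) β :=
    hβi ▸ (hF.isMissingColor i hi).rotateFan hxw.symm fun l hl h => by
      have := hF.eq_of_apply_eq hi.le (by omega) h
      omega
  have hβt := hβ.rotateFan (i := i) hxt.symm (htf i hi.le)
  by_cases hr : ((G.deleteEdges {s(x, f i)}).kempeGraph (rotateFan c x f i) α β).Reachable x (f i)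
  swap
  · exact exists_isProperEdgeColoring_of_not_reachable hcA hαA hβw hr
  have hrt := not_reachable_of_subsingleton_neighborSet (fun _ _ _ _ => hcA.kempeGraph_adj_eq_or_eq)
    (hcA.kempeGraph_neighborSet_subsingleton (.inl hαA))
    (hcA.kempeGraph_neighborSet_subsingleton (.inr hβw))
    (hcA.kempeGraph_neighborSet_subsingleton (.inr hβt)) hxw hxt hwt hr
  refine exists_isProperEdgeColoring_of_not_reachable (hF.isProperEdgeColoring_rotateFan hc le_rfl)
    (hF.isMissingColor_rotateFan_center le_rfl hα) (hβ.rotateFan hxt.symm (htf k le_rfl))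
    fun hrL => hrt ?_
  exact hrL.of_forall_adj fun _ _ hab =>
    hF.reachable_of_adj_kempeGraph_rotateFan hc hα hi hβi hr hab

theorem IsFan.exists_isProperEdgeColoring [Fintype V] [Fintype κ] [DecidableEq κ]
    {H : SimpleGraph V} [DecidableRel H.Adj] (hGH : G ≤ H)
    (hH : ∀ v, H.degree v < Fintype.card κ) {f : ℕ → V} {k : ℕ} (hF : G.IsFan c x f k)
    (hc : (G.deleteEdges {s(x, f 0)}).IsProperEdgeColoring c)
    (hα : (G.deleteEdges {s(x, f 0)}).IsMissingColor c x α) :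
    ∃ c' : Sym2 V → κ, G.IsProperEdgeColoring c' := by
  obtain ⟨β, hβ⟩ := exists_isMissingColor ((deleteEdges_le _).trans hGH) (hH (f k)) c
  by_cases hβx : (G.deleteEdges {s(x, f 0)}).IsMissingColor c x β
  · exact ⟨_, (hF.isProperEdgeColoring_rotateFan hc le_rfl).update_of_isMissingColor
      (hF.isMissingColor_rotateFan_center le_rfl hβx)
      (hβ.rotateFan (hF.adj k le_rfl).ne' fun l hl h => by
        have := hF.eq_of_apply_eq le_rfl hl.le h
        omega)⟩
  obtain ⟨u, hu, hcu⟩ : ∃ u, (G.deleteEdges {s(x, f 0)}).Adj x u ∧ c s(x, u) = β := by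
    unfold IsMissingColor at hβx
    push Not at hβx
    exact hβx
  by_cases hold : ∃ j ≤ k, f j = u
  · obtain ⟨j, hj, rfl⟩ := hold
    obtain ⟨i, rfl⟩ := Nat.exists_eq_succ_of_ne_zero (n := j) (by
      rintro rfl
      exact (deleteEdges_singleton_adj_left.mp hu).2 rfl)
    exact hF.exists_isProperEdgeColoring_of_last_missing_on_fan hc hα hβ hj hcu
  · push Not at hold
    have hk := hF.lt_card
    have h0 : update f (k + 1) u 0 = f 0 := update_of_ne (by omega) _ _
    exact (hF.extend hu hold (hcu ▸ hβ)).exists_isProperEdgeColoring hGH hH (h0 ▸ hc) (h0 ▸ hα)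
termination_by Fintype.card V - k

end Fan

theorem exists_isProperEdgeColoring_of_degree_lt [Fintype V] [Fintype κ] (H : SimpleGraph V)
    [DecidableRel H.Adj] (hH : ∀ v, H.degree v < Fintype.card κ) :
    ∃ c : Sym2 V → κ, H.IsProperEdgeColoring c := by
  classical
  suffices ∀ G ≤ H, ∃ c : Sym2 V → κ, G.IsProperEdgeColoring c from this H le_rfl
  intro G
  induction G using WellFoundedLT.induction with
  | _ G ih =>
  intro hGH
  by_cases hE : ∃ x y, G.Adj x y
  · obtain ⟨x, y, hxy⟩ := hE
    have hlt : G.deleteEdges {s(x, y)} < G := (deleteEdges_le _).lt_of_ne fun h =>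
      (deleteEdges_singleton_adj_left.mp (h ▸ hxy)).2 rfl
    obtain ⟨c, hc⟩ := ih _ hlt ((deleteEdges_le _).trans hGH)
    obtain ⟨α, hα⟩ := exists_isMissingColor ((deleteEdges_le _).trans hGH) (hH x) c
    exact (IsFan.single hxy).exists_isProperEdgeColoring hGH hH hc hα
  · push Not at hE
    have hκ (e : Sym2 V) : Nonempty κ :=
      e.inductionOn fun v _ => Fintype.card_pos_iff.mp ((Nat.zero_le _).trans_lt (hH v))
    exact ⟨fun e => (hκ e).some, fun v a _ ha => absurd ha (hE v a)⟩

end SimpleGraph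

theorem stmt_19_general {V : Type*} [Fintype V] (H : SimpleGraph V)
    [DecidableRel H.Adj] :
    ∃ M : Fin (H.maxDegree + 1) → Finset (Sym2 V),
      (∀ i, M i ⊆ H.edgeFinset) ∧
      (∀ i, ∀ e ∈ M i, ∀ f ∈ M i, e ≠ f → ∀ v : V, ¬(v ∈ e ∧ v ∈ f)) ∧
      (∀ i j, i ≠ j → Disjoint (M i) (M j)) ∧
      (∀ e ∈ H.edgeFinset, ∃ i, e ∈ M i) := by
  obtain ⟨c, hc⟩ := H.exists_isProperEdgeColoring_of_degree_lt (κ := Fin (H.maxDegree + 1))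
    fun v => by simpa using Nat.lt_succ_of_le (H.degree_le_maxDegree v)
  refine ⟨fun i => H.edgeFinset.filter (c · = i), fun i => filter_subset _ _, ?_, ?_, ?_⟩
  · rintro i e he f hf hef v ⟨hve, hvf⟩
    simp only [mem_filter, SimpleGraph.mem_edgeFinset] at he hf
    obtain ⟨a, rfl⟩ := Sym2.mem_iff_exists.mp hve
    obtain ⟨b, rfl⟩ := Sym2.mem_iff_exists.mp hvf
    exact hef (congrArg _ (hc he.1 hf.1 (he.2.trans hf.2.symm)))
  · exact fun i j hij => disjoint_filter.mpr fun e _ hi hj => hij (hi.symm.trans hj)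
  · exact fun e he => ⟨c e, mem_filter.mpr ⟨he, rfl⟩⟩

theorem stmt_19 {V : Type*} [Fintype V] [DecidableEq V] (H : SimpleGraph V)
    [DecidableRel H.Adj] :
    ∃ M : Fin (H.maxDegree + 1) → Finset (Sym2 V),
      (∀ i, M i ⊆ H.edgeFinset) ∧
      (∀ i, ∀ e ∈ M i, ∀ f ∈ M i, e ≠ f → ∀ v : V, ¬(v ∈ e ∧ v ∈ f)) ∧
      (∀ i j, i ≠ j → Disjoint (M i) (M j)) ∧
      (∀ e ∈ H.edgeFinset, ∃ i, e ∈ M i) :=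
  stmt_19_general H
end
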